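/- A signature σ for a Join bag (L∪R, S, F) is valid if and only if there exists a valid reconciliation μ for (L∪R, S, F) such that σ is the ({left,right}→past)-restriction of μ. -/

import Mathlib

namespace TreeContainment

open scoped Classical

variable {V Λ : Type}

/-- A directed graph with an explicit vertex set. -/
structure DGraph (V : Type) where
  verts : Set V
  Arc : V → V → Prop
  arc_left : ∀ ⦃u v : V⦄, Arc u v → u ∈ verts
  arc_right : ∀ ⦃u v : V⦄, Arc u v → v ∈ verts

noncomputable def DGraph.inDeg (G : DGraph V) (v : V) : ℕ := {u : V | G.Arc u v}.ncard
noncomputable def DGraph.outDeg (G : DGraph V) (v : V) : ℕ := {u : V | G.Arc v u}.ncard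
def DGraph.Acyclic (G : DGraph V) : Prop := ∀ v : V, ¬ Relation.TransGen G.Arc v v

def IsSubgraph (H G : DGraph V) : Prop :=
  H.verts ⊆ G.verts ∧ ∀ ⦃u v⦄, H.Arc u v → G.Arc u v

/-- The consecutive pairs (arcs) of a list of vertices. -/
def listArcs (p : List V) : List (V × V) := p.zip p.tail

def IsArcOf (p : List V) (a b : V) : Prop := (a, b) ∈ listArcs p

lemma isArcOf_mem_left {p : List V} {a b : V} (h : IsArcOf p a b) : a ∈ p :=
  (List.of_mem_zip h).1

lemma isArcOf_mem_right {p : List V} {a b : V} (h : IsArcOf p a b) : b ∈ p :=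
  List.mem_of_mem_tail (List.of_mem_zip h).2

/-- `p` is a directed path from `u` to `v` with respect to the arc relation `A`. -/
def DipathFrom (A : V → V → Prop) (u v : V) (p : List V) : Prop :=
  p.Chain' A ∧ p.Nodup ∧ p.head? = some u ∧ p.getLast? = some v

/-- Rooted binary phylogenetic network. -/
def IsBinPhyloNet (N : DGraph V) : Prop :=
  N.Acyclic ∧ N.verts.Finite ∧ N.verts.Nonempty ∧
  (∃! ρ, ρ ∈ N.verts ∧ N.inDeg ρ = 0) ∧
  ∀ v ∈ N.verts,
    (N.inDeg v = 0 ∧ N.outDeg v = 2) ∨ (N.inDeg v = 1 ∧ N.outDeg v = 0) ∨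
    (N.inDeg v = 2 ∧ N.outDeg v = 1) ∨ (N.inDeg v = 1 ∧ N.outDeg v = 2)

/-- Rooted binary phylogenetic tree: a binary phylogenetic network without reticulations. -/
def IsBinPhyloTree (T : DGraph V) : Prop :=
  IsBinPhyloNet T ∧ ∀ v ∈ T.verts, T.inDeg v ≤ 1

def leaves (G : DGraph V) : Set V :=
  {v : V | v ∈ G.verts ∧ G.inDeg v = 1 ∧ G.outDeg v = 0}

/-- Equally labelled leaves of `N` and `T` are identified: the common vertices of the two
graphs are exactly the leaves of each side. -/
def SharedLeaves (N T : DGraph V) : Prop :=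
  N.verts ∩ T.verts = leaves N ∧ N.verts ∩ T.verts = leaves T

/-- A witness that `H` is a subdivision of the tree `Tg`. -/
structure SubdivWitness (H Tg : DGraph V) where
  vmap : V → V
  pmap : V → V → List V
  vmap_mem : ∀ u ∈ Tg.verts, vmap u ∈ H.verts
  inj : ∀ u ∈ Tg.verts, ∀ v ∈ Tg.verts, vmap u = vmap v → u = v
  path_spec : ∀ ⦃u v⦄, Tg.Arc u v → DipathFrom H.Arc (vmap u) (vmap v) (pmap u v)
  path_len : ∀ ⦃u v⦄, Tg.Arc u v → 2 ≤ (pmap u v).length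
  internal_new : ∀ ⦃u v⦄, Tg.Arc u v → ∀ z ∈ pmap u v, z ≠ vmap u → z ≠ vmap v →
    ∀ w ∈ Tg.verts, vmap w ≠ z
  internal_disjoint : ∀ ⦃u v u' v'⦄, Tg.Arc u v → Tg.Arc u' v' → (u, v) ≠ (u', v') →
    ∀ z, z ∈ pmap u v → z ∈ pmap u' v' →
      (z = vmap u ∨ z = vmap v) ∧ (z = vmap u' ∨ z = vmap v')
  arcs_cover : ∀ a b, H.Arc a b → ∃ u v, Tg.Arc u v ∧ IsArcOf (pmap u v) a b
  verts_cover : ∀ z ∈ H.verts, (∃ u ∈ Tg.verts, vmap u = z) ∨ ∃ u v, Tg.Arc u v ∧ z ∈ pmap u v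

/-- `N` displays `T`: some subgraph of `N` is a subdivision of `T`, respecting
the (identified) leaf labels. -/
def Displays (N T : DGraph V) : Prop :=
  ∃ H : DGraph V, IsSubgraph H N ∧
    ∃ w : SubdivWitness H T, ∀ u ∈ T.verts ∩ N.verts, w.vmap u = u

/-- An embedding function of the tree `Tg` into the network `Ng`
(an embedding function on the display graph `D(Ng,Tg)`). -/
structure EmbOn (Tg Ng : DGraph V) where
  vmap : V → V
  pmap : V → V → List V
  vmap_mem : ∀ u ∈ Tg.verts, vmap u ∈ Ng.verts
  path_spec : ∀ ⦃u v⦄, Tg.Arc u v → DipathFrom Ng.Arc (vmap u) (vmap v) (pmap u v)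
  inj : ∀ u ∈ Tg.verts, ∀ v ∈ Tg.verts, vmap u = vmap v → u = v
  fixes : ∀ u ∈ Tg.verts ∩ Ng.verts, vmap u = u
  arc_disjoint : ∀ ⦃u v u' v'⦄, Tg.Arc u v → Tg.Arc u' v' → (u, v) ≠ (u', v') →
    ∀ e, e ∈ listArcs (pmap u v) → e ∉ listArcs (pmap u' v')
  share : ∀ ⦃u v u' v'⦄, Tg.Arc u v → Tg.Arc u' v' → (u, v) ≠ (u', v') →
    ∀ z, z ∈ pmap u v → z ∈ pmap u' v' →
      ∃ w, (w = u ∨ w = v) ∧ (w = u' ∨ w = v') ∧ vmap w = z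

/-- The subgraph of the network consisting of all arcs lying on some embedding path. -/
def usedSubgraph (Tg Ng : DGraph V) (φ : EmbOn Tg Ng) : DGraph V where
  verts := {z : V | ∃ u v, Tg.Arc u v ∧ z ∈ φ.pmap u v}
  Arc a b := ∃ u v, Tg.Arc u v ∧ IsArcOf (φ.pmap u v) a b
  arc_left := by
    rintro a b ⟨u, v, huv, harc⟩
    exact ⟨u, v, huv, isArcOf_mem_left harc⟩
  arc_right := by
    rintro a b ⟨u, v, huv, harc⟩
    exact ⟨u, v, huv, isArcOf_mem_right harc⟩

/-- A display graph: a DAG whose vertex set is covered by a tree side `VT`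
and a network side `VN`, satisfying the degree conditions of the paper. -/
structure DispGraph (V : Type) extends DGraph V where
  VT : Set V
  VN : Set V
  union_eq : VT ∪ VN = verts
  finite : verts.Finite
  acyclic : ∀ v : V, ¬ Relation.TransGen Arc v v
  tree_indeg : ∀ v : V, {u : V | Arc u v ∧ u ∈ VT ∧ v ∈ VT}.ncard ≤ 1
  indeg_le : ∀ v : V, {u : V | Arc u v}.ncard ≤ 2
  outdeg_le : ∀ v : V, {u : V | Arc v u}.ncard ≤ 2
  totdeg_le : ∀ v : V, {u : V | Arc u v}.ncard + {u : V | Arc v u}.ncard ≤ 3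
  shared_out : ∀ v ∈ VT ∩ VN, ∀ u, ¬ Arc v u
  shared_in_T : ∀ v ∈ VT ∩ VN, {u : V | Arc u v ∧ u ∈ VT}.ncard ≤ 1
  shared_in_N : ∀ v ∈ VT ∩ VN, {u : V | Arc u v ∧ u ∈ VN}.ncard ≤ 1

/-- The tree side of a display graph. -/
def DispGraph.treeSide (G : DispGraph V) : DGraph V where
  verts := G.VT
  Arc u v := G.Arc u v ∧ u ∈ G.VT ∧ v ∈ G.VT
  arc_left := by intro u v h; exact h.2.1
  arc_right := by intro u v h; exact h.2.2

/-- The network side of a display graph. -/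
def DispGraph.netSide (G : DispGraph V) : DGraph V where
  verts := G.VN
  Arc u v := G.Arc u v ∧ u ∈ G.VN ∧ v ∈ G.VN
  arc_left := by intro u v h; exact h.2.1
  arc_right := by intro u v h; exact h.2.2

def DispGraph.TArc (G : DispGraph V) (u v : V) : Prop := G.treeSide.Arc u v
def DispGraph.NArc (G : DispGraph V) (u v : V) : Prop := G.netSide.Arc u v
noncomputable def DispGraph.inDeg (G : DispGraph V) : V → ℕ := G.toDGraph.inDeg
noncomputable def DispGraph.outDeg (G : DispGraph V) : V → ℕ := G.toDGraph.outDeg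

/-- An embedding function on a display graph: an embedding of its tree side into
its network side. -/
abbrev EmbFun (G : DispGraph V) := EmbOn G.treeSide G.netSide

/-- The data of a containment structure: a display graph, an embedding function on it,
and an isolabelling into vertices of the ambient display graph or labels from `Λ`. -/
structure CStruct (V Λ : Type) where
  G : DispGraph V
  emb : EmbFun G
  ι : V → V ⊕ Λ

/-- Relabelling a containment structure by a restriction function. -/
def CStruct.relabel (g : V ⊕ Λ → V ⊕ Λ) (χ : CStruct V Λ) : CStruct V Λ :=
  ⟨χ.G, χ.emb, fun v => g (χ.ι v)⟩

/-- `ι` is an `(S,Y)`-isolabelling on the display graph of `χ`, relative to the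
ambient display graph `Din`. -/
def IsIsolabelling (Din : DispGraph V) (S : Set V) (Ys : Set Λ) (χ : CStruct V Λ) : Prop :=
  (∀ u ∈ χ.G.verts, (∃ s ∈ S, χ.ι u = Sum.inl s) ∨ (∃ y ∈ Ys, χ.ι u = Sum.inr y)) ∧
  (∀ s ∈ S, ∃ u ∈ χ.G.verts, χ.ι u = Sum.inl s) ∧
  (∀ u ∈ χ.G.verts, ∀ s ∈ S, χ.ι u = Sum.inl s →
    (s ∈ Din.VN → u ∈ χ.G.VN) ∧ (s ∈ Din.VT → u ∈ χ.G.VT)) ∧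
  (∀ u ∈ χ.G.verts, ∀ v ∈ χ.G.verts, ∀ s ∈ S, χ.ι u = Sum.inl s → χ.ι v = Sum.inl s → u = v) ∧
  (∀ u ∈ χ.G.verts, ∀ v ∈ χ.G.verts, ∀ s ∈ S, ∀ t ∈ S,
    χ.ι u = Sum.inl s → χ.ι v = Sum.inl t → (χ.G.Arc u v ↔ Din.Arc s t))

/-- `χ` is an `(S,Y)`-containment structure relative to the ambient display graph `Din`. -/
def IsCS (Din : DispGraph V) (S : Set V) (Ys : Set Λ) (χ : CStruct V Λ) : Prop :=
  IsIsolabelling Din S Ys χ ∧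
  (∀ u ∈ χ.G.verts, ∀ s ∈ S, χ.ι u = Sum.inl s →
    χ.G.inDeg u = Din.inDeg s ∧ χ.G.outDeg u = Din.outDeg s) ∧
  (∀ u ∈ χ.G.VT, χ.ι u ≠ χ.ι (χ.emb.vmap u) → χ.G.outDeg u = 2)

/-- A tree arc `uv` is `y`-redundant. -/
def TArcRedundant (χ : CStruct V Λ) (y : Λ) (u v : V) : Prop :=
  χ.G.TArc u v ∧ χ.ι u = Sum.inr y ∧ χ.ι v = Sum.inr y ∧
    ∀ z ∈ χ.emb.pmap u v, χ.ι z = Sum.inr y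

/-- A network arc `ab` is `y`-redundant. -/
def NArcRedundant (χ : CStruct V Λ) (y : Λ) (a b : V) : Prop :=
  χ.G.NArc a b ∧ χ.ι a = Sum.inr y ∧ χ.ι b = Sum.inr y ∧
    ∀ u v, χ.G.TArc u v → IsArcOf (χ.emb.pmap u v) a b → TArcRedundant χ y u v

def ArcRedundant (χ : CStruct V Λ) (y : Λ) (u v : V) : Prop :=
  TArcRedundant χ y u v ∨ NArcRedundant χ y u v

/-- A tree vertex `v` is `y`-redundant. -/
def TVertRedundant (χ : CStruct V Λ) (y : Λ) (v : V) : Prop :=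
  v ∈ χ.G.VT ∧ χ.ι v = Sum.inr y ∧ χ.ι (χ.emb.vmap v) = Sum.inr y ∧
  (∀ u, χ.G.Arc u v → ArcRedundant χ y u v) ∧
  (∀ u, χ.G.Arc v u → ArcRedundant χ y v u) ∧
  (∀ u, χ.G.Arc u (χ.emb.vmap v) → ArcRedundant χ y u (χ.emb.vmap v)) ∧
  (∀ u, χ.G.Arc (χ.emb.vmap v) u → ArcRedundant χ y (χ.emb.vmap v) u)

/-- A network vertex `v` is `y`-redundant. -/
def NVertRedundant (χ : CStruct V Λ) (y : Λ) (v : V) : Prop :=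
  v ∈ χ.G.VN ∧ χ.ι v = Sum.inr y ∧
  (∀ u, χ.G.Arc u v → ArcRedundant χ y u v) ∧
  (∀ u, χ.G.Arc v u → ArcRedundant χ y v u) ∧
  (∀ w ∈ χ.G.VT, χ.emb.vmap w = v → TVertRedundant χ y w)

def VertRedundant (χ : CStruct V Λ) (y : Λ) (v : V) : Prop :=
  TVertRedundant χ y v ∨ NVertRedundant χ y v

/-- `χ'` is the `g`-restriction of `χ`: relabel by `g` and delete all redundant
arcs and vertices; the embedding and isolabelling are restricted accordingly. -/
def IsRestrictionOf (g : V ⊕ Λ → V ⊕ Λ) (χ' χ : CStruct V Λ) : Prop :=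
  χ'.G.verts = χ.G.verts \ {v : V | ∃ y, VertRedundant (χ.relabel g) y v} ∧
  (∀ u v, χ'.G.Arc u v ↔ (χ.G.Arc u v ∧ ¬ ∃ y, ArcRedundant (χ.relabel g) y u v)) ∧
  χ'.G.VT = χ.G.VT ∩ χ'.G.verts ∧
  χ'.G.VN = χ.G.VN ∩ χ'.G.verts ∧
  (∀ v ∈ χ'.G.VT, χ'.emb.vmap v = χ.emb.vmap v) ∧
  (∀ u v, χ'.G.TArc u v → χ'.emb.pmap u v = χ.emb.pmap u v) ∧
  (∀ v ∈ χ'.G.verts, χ'.ι v = g (χ.ι v))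

/-- `g : S ∪ Y → S' ∪ Y` is a restriction function: identity on `S'`, mapping the rest
of `S` into `Y`, and mapping `Y` into `Y`. -/
def IsRestrictionFun (S S' : Set V) (Ys : Set Λ) (g : V ⊕ Λ → V ⊕ Λ) : Prop :=
  (∀ v ∈ S', g (Sum.inl v) = Sum.inl v) ∧
  (∀ v ∈ S, v ∉ S' → ∃ y ∈ Ys, g (Sum.inl v) = Sum.inr y) ∧
  (∀ y ∈ Ys, ∃ y' ∈ Ys, g (Sum.inr y) = Sum.inr y')

/-- A well-behaved containment structure. -/
def WellBehaved (Din : DispGraph V) (Ys : Set Λ) (χ : CStruct V Λ) : Prop :=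
  (∀ u v, χ.G.Arc u v → ¬ ∃ y ∈ Ys, ArcRedundant χ y u v) ∧
  (∀ v ∈ χ.G.verts, ¬ ∃ y ∈ Ys, VertRedundant χ y v) ∧
  (∀ u v, χ.G.Arc u v → ∀ y ∈ Ys, ∀ y' ∈ Ys,
    χ.ι u = Sum.inr y → χ.ι v = Sum.inr y' → y = y') ∧
  (∀ u ∈ χ.G.verts, ∀ v ∈ χ.G.verts, ∀ s t : V, χ.ι u = Sum.inl s → χ.ι v = Sum.inl t →
    Relation.ReflTransGen χ.G.Arc u v → Relation.ReflTransGen Din.Arc s t)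

/-- The labels used for signatures and reconciliations. -/
inductive Lab : Type where
  | past | future | left | right
deriving DecidableEq

/-- The restriction function sending every vertex of `P` to the label `y`. -/
noncomputable def sendVerts (P : Set V) (y : Lab) : V ⊕ Lab → V ⊕ Lab
  | Sum.inl v => if v ∈ P then Sum.inr y else Sum.inl v
  | Sum.inr y' => Sum.inr y'

/-- The restriction function sending `A` to label `a` and `B` to label `b`. -/
noncomputable def sendVerts2 (A : Set V) (a : Lab) (B : Set V) (b : Lab) :
    V ⊕ Lab → V ⊕ Lab
  | Sum.inl v => if v ∈ A then Sum.inr a else if v ∈ B then Sum.inr b else Sum.inl v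
  | Sum.inr y => Sum.inr y

/-- The restriction function merging all labels in `A` into the label `y`. -/
noncomputable def sendLabs (A : Set Lab) (y : Lab) : V ⊕ Lab → V ⊕ Lab
  | Sum.inl v => Sum.inl v
  | Sum.inr y' => if y' ∈ A then Sum.inr y else Sum.inr y'

/-- The restriction function sending label `a` to `ya` and label `b` to `yb`. -/
def sendTwoLabs (a ya b yb : Lab) : V ⊕ Lab → V ⊕ Lab
  | Sum.inl v => Sum.inl v
  | Sum.inr y => if y = a then Sum.inr ya else if y = b then Sum.inr yb else Sum.inr y

/-- `(P,S,F)` is a bag of a tree decomposition of `Din`: a partition of the vertices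
with `S` separating `P` from `F`. -/
def IsBag (Din : DispGraph V) (P S F : Set V) : Prop :=
  P ∪ S ∪ F = Din.verts ∧ Disjoint P S ∧ Disjoint P F ∧ Disjoint S F ∧
  ∀ u v, (Din.Arc u v ∨ Din.Arc v u) → u ∈ P → v ∈ F → False

def pfLabs : Set Lab := {Lab.past, Lab.future}
def lrfLabs : Set Lab := {Lab.left, Lab.right, Lab.future}

/-- A signature for a bag with present `S` is an `(S,{past,future})`-containment structure. -/
def IsSignature (Din : DispGraph V) (S : Set V) (σ : CStruct V Lab) : Prop :=
  IsCS Din S pfLabs σ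

/-- An `F`-partial solution for a bag `(P,S,F)` is a `(P∪S,{future})`-containment structure. -/
def IsPartialSolution (Din : DispGraph V) (P S : Set V) (ψ : CStruct V Lab) : Prop :=
  IsCS Din (P ∪ S) ({Lab.future} : Set Lab) ψ

/-- A (well-behaved) signature is valid for the bag `(P,S,F)` if it is the
`(P→past)`-restriction of a well-behaved `F`-partial solution. -/
def ValidSig (Din : DispGraph V) (P S F : Set V) (σ : CStruct V Lab) : Prop :=
  ∃ ψ : CStruct V Lab, IsPartialSolution Din P S ψ ∧
    WellBehaved Din ({Lab.future} : Set Lab) ψ ∧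
    IsRestrictionOf (sendVerts P Lab.past) σ ψ

/-- A reconciliation for a Join bag with present `S` is an
`(S,{left,right,future})`-containment structure. -/
def IsReconciliation (Din : DispGraph V) (S : Set V) (μ : CStruct V Lab) : Prop :=
  IsCS Din S lrfLabs μ

/-- A reconciliation is valid for the Join bag `(L∪R,S,F)` if it is the
`(L→left, R→right)`-restriction of a well-behaved `F`-partial solution. -/
def ValidRecon (Din : DispGraph V) (L R S F : Set V) (μ : CStruct V Lab) : Prop :=
  ∃ ψ : CStruct V Lab, IsCS Din (L ∪ R ∪ S) ({Lab.future} : Set Lab) ψ ∧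
    WellBehaved Din ({Lab.future} : Set Lab) ψ ∧
    IsRestrictionOf (sendVerts2 L Lab.left R Lab.right) μ ψ

/-- `z` is an internal vertex of the replacement path `Pm u v`. -/
def internalOf (Pm : V → V → List V) (u v z : V) : Prop :=
  z ∈ Pm u v ∧ z ≠ u ∧ z ≠ v

/-- `σ₀` is a subdivision of the containment structure `σ`, with each network
arc `uv` of `σ` replaced by the path `Pm u v`. -/
def IsSubdivisionOfCS (σ₀ σ : CStruct V Λ) (Pm : V → V → List V) : Prop :=
  σ₀.G.VT = σ.G.VT ∧
  (∀ u v, σ₀.G.TArc u v ↔ σ.G.TArc u v) ∧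
  σ.G.VN ⊆ σ₀.G.VN ∧
  σ₀.G.verts = σ.G.verts ∪ {z : V | ∃ u v, σ.G.NArc u v ∧ z ∈ Pm u v} ∧
  (∀ u v, σ.G.NArc u v → DipathFrom σ₀.G.NArc u v (Pm u v) ∧ 2 ≤ (Pm u v).length) ∧
  (∀ u v, σ.G.NArc u v → 2 < (Pm u v).length →
    ∃ y : Λ, σ.ι u = Sum.inr y ∧ σ.ι v = Sum.inr y) ∧
  (∀ u v, σ.G.NArc u v → ∀ z, internalOf Pm u v z →
    z ∉ σ.G.verts ∧ z ∈ σ₀.G.VN ∧ σ₀.ι z = σ.ι u) ∧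
  (∀ u v u' v', σ.G.NArc u v → σ.G.NArc u' v' → (u, v) ≠ (u', v') →
    ∀ z, internalOf Pm u v z → ¬ internalOf Pm u' v' z) ∧
  (∀ a b, σ₀.G.NArc a b ↔ ∃ u v, σ.G.NArc u v ∧ IsArcOf (Pm u v) a b) ∧
  (∀ v ∈ σ.G.verts, σ₀.ι v = σ.ι v) ∧
  (∀ v ∈ σ.G.VT, σ₀.emb.vmap v = σ.emb.vmap v) ∧
  (∀ u v, σ.G.TArc u v →
    (σ₀.emb.pmap u v).head? = (σ.emb.pmap u v).head? ∧
    (σ₀.emb.pmap u v).getLast? = (σ.emb.pmap u v).getLast? ∧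
    ∀ a b, IsArcOf (σ₀.emb.pmap u v) a b ↔
      ∃ c d, IsArcOf (σ.emb.pmap u v) c d ∧ IsArcOf (Pm c d) a b)

/-- `χ` has a long `y`-path: a suppressible degree-(1,1) network vertex between two
network arcs, all three vertices labelled `y`, with no tree vertex embedded into it. -/
def LongYPath (χ : CStruct V Λ) (y : Λ) : Prop :=
  ∃ x₁ x₂ x₃ : V, χ.G.NArc x₁ x₂ ∧ χ.G.NArc x₂ x₃ ∧
    {u : V | χ.G.NArc u x₂}.ncard = 1 ∧ {u : V | χ.G.NArc x₂ u}.ncard = 1 ∧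
    χ.ι x₁ = Sum.inr y ∧ χ.ι x₂ = Sum.inr y ∧ χ.ι x₃ = Sum.inr y ∧
    ∀ w ∈ χ.G.VT, χ.emb.vmap w ≠ x₂

def IsCompact (χ : CStruct V Λ) : Prop := ∀ y : Λ, ¬ LongYPath χ y

/-- `σ` is the compact form of `σ₀`: `σ` is compact and `σ₀` is a subdivision of `σ`. -/
def IsCompactFormOf (σ σ₀ : CStruct V Λ) : Prop :=
  IsCompact σ ∧ ∃ Pm : V → V → List V, IsSubdivisionOfCS σ₀ σ Pm

/-- Isomorphism of containment structures. -/
def CSIso (χ χ' : CStruct V Λ) : Prop :=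
  ∃ f : V → V, Set.BijOn f χ.G.verts χ'.G.verts ∧
    (∀ v ∈ χ.G.verts, (v ∈ χ.G.VT ↔ f v ∈ χ'.G.VT)) ∧
    (∀ v ∈ χ.G.verts, (v ∈ χ.G.VN ↔ f v ∈ χ'.G.VN)) ∧
    (∀ u ∈ χ.G.verts, ∀ v ∈ χ.G.verts, (χ.G.Arc u v ↔ χ'.G.Arc (f u) (f v))) ∧
    (∀ v ∈ χ.G.verts, χ'.ι (f v) = χ.ι v) ∧
    (∀ v ∈ χ.G.VT, χ'.emb.vmap (f v) = f (χ.emb.vmap v)) ∧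
    (∀ u v, χ.G.TArc u v → χ'.emb.pmap (f u) (f v) = (χ.emb.pmap u v).map f)

/-! ### Auxiliary lemmas for Statement 13 -/

section ListHelpers

lemma listArcs_cons₂ (a b : V) (t : List V) :
    listArcs (a :: b :: t) = (a, b) :: listArcs (b :: t) := rfl

lemma chain'_iff_arcs {A : V → V → Prop} :
    ∀ {p : List V}, p.Chain' A ↔ ∀ a b, IsArcOf p a b → A a b
  | [] => by simp [IsArcOf, listArcs]; exact List.isChain_nil
  | [a] => by simp [IsArcOf, listArcs]; exact List.isChain_singleton a
  | a :: b :: t => by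
    rw [show List.Chain' A (a :: b :: t) ↔ A a b ∧ List.Chain' A (b :: t) from
      List.isChain_cons_cons, chain'_iff_arcs (p := b :: t)]
    constructor
    · rintro ⟨h1, h2⟩ x y hxy
      rcases List.mem_cons.mp hxy with h | h
      · obtain ⟨rfl, rfl⟩ := Prod.mk.injEq .. ▸ h
        exact h1
      · exact h2 x y h
    · intro h
      exact ⟨h a b (List.mem_cons_self),
        fun x y hxy => h x y (List.mem_cons_of_mem _ hxy)⟩

lemma isArcOf_cons' {p : List V} {x a b : V} (h : IsArcOf p a b) (hp : p ≠ []) :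
    IsArcOf (x :: p) a b := by
  match p, hp with
  | y :: t, _ => exact List.mem_cons_of_mem _ h

lemma exists_arc_of_mem : ∀ {p : List V}, 2 ≤ p.length → ∀ {z : V}, z ∈ p →
    (∃ w, IsArcOf p z w) ∨ ∃ w, IsArcOf p w z
  | a :: b :: t, _, z, hz => by
    rcases List.mem_cons.mp hz with rfl | hz'
    · exact Or.inl ⟨b, List.mem_cons_self⟩
    · match t with
      | [] =>
        have hzb : z = b := by simpa using hz'
        subst hzb
        exact Or.inr ⟨a, List.mem_cons_self⟩
      | c :: t' =>
        rcases exists_arc_of_mem (p := b :: c :: t') (by simp) hz' with ⟨w, hw⟩ | ⟨w, hw⟩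
        · exact Or.inl ⟨w, isArcOf_cons' hw (by simp)⟩
        · exact Or.inr ⟨w, isArcOf_cons' hw (by simp)⟩

lemma mem_of_head?_eq {p : List V} {a : V} (h : p.head? = some a) : a ∈ p := by
  cases p with
  | nil => simp at h
  | cons x t =>
    have : x = a := by simpa using h
    subst this
    exact List.mem_cons_self

lemma DipathFrom.two_le {A : V → V → Prop} {u v : V} {p : List V}
    (h : DipathFrom A u v p) (hne : u ≠ v) : 2 ≤ p.length := by
  obtain ⟨-, -, hh, hl⟩ := h
  match p with
  | [] => simp at hh
  | [a] =>
    have h1 : a = u := by simpa using hh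
    have h2 : a = v := by simpa [List.getLast?] using hl
    exact absurd (h1 ▸ h2) hne
  | a :: b :: t => simp

lemma DipathFrom.first_arc {A : V → V → Prop} {u v : V} {p : List V}
    (h : DipathFrom A u v p) (hne : u ≠ v) : ∃ z, A u z := by
  obtain ⟨hc, -, hh, hl⟩ := h
  match p with
  | [] => simp at hh
  | [a] =>
    have h1 : a = u := by simpa using hh
    have h2 : a = v := by simpa [List.getLast?] using hl
    exact absurd (h1 ▸ h2) hne
  | a :: b :: t =>
    have h1 : a = u := by simpa using hh
    subst h1
    exact ⟨b, (List.isChain_cons_cons.mp hc).1⟩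

end ListHelpers

section GraphHelpers

lemma DispGraph.VT_subset (G : DispGraph V) : G.VT ⊆ G.verts := by
  rw [← G.union_eq]; exact Set.subset_union_left

lemma DispGraph.VN_subset (G : DispGraph V) : G.VN ⊆ G.verts := by
  rw [← G.union_eq]; exact Set.subset_union_right

lemma DispGraph.arc_ne {G : DispGraph V} {u v : V} (h : G.Arc u v) : u ≠ v := by
  rintro rfl; exact G.acyclic u (Relation.TransGen.single h)

variable {χ : CStruct V Λ}

lemma pmap_dipath {u v : V} (h : χ.G.TArc u v) :
    DipathFrom χ.G.netSide.Arc (χ.emb.vmap u) (χ.emb.vmap v) (χ.emb.pmap u v) :=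
  χ.emb.path_spec h

lemma tarc_arc {u v : V} (h : χ.G.TArc u v) : χ.G.Arc u v := h.1

lemma vmap_ne_of_tarc {u v : V} (h : χ.G.TArc u v) : χ.emb.vmap u ≠ χ.emb.vmap v :=
  fun he => (DispGraph.arc_ne h.1) (χ.emb.inj u h.2.1 v h.2.2 he)

lemma pmap_two {u v : V} (h : χ.G.TArc u v) : 2 ≤ (χ.emb.pmap u v).length :=
  (pmap_dipath h).two_le (vmap_ne_of_tarc h)

lemma vmap_mem_pmap {u v : V} (h : χ.G.TArc u v) : χ.emb.vmap u ∈ χ.emb.pmap u v :=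
  mem_of_head?_eq (pmap_dipath h).2.2.1

lemma pmap_arc {u v a b : V} (h : χ.G.TArc u v) (ha : IsArcOf (χ.emb.pmap u v) a b) :
    χ.G.NArc a b :=
  chain'_iff_arcs.mp (pmap_dipath h).1 a b ha

lemma pmap_mem_VN {u v z : V} (h : χ.G.TArc u v) (hz : z ∈ χ.emb.pmap u v) :
    z ∈ χ.G.VN := by
  rcases exists_arc_of_mem (pmap_two h) hz with ⟨w, hw⟩ | ⟨w, hw⟩
  · exact (pmap_arc h hw).2.1
  · exact (pmap_arc h hw).2.2

lemma shared_image_no_tarc {u v : V} (hx : χ.emb.vmap u ∈ χ.G.VT) (h : χ.G.TArc u v) :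
    False := by
  obtain ⟨z, hz⟩ := (pmap_dipath h).first_arc (vmap_ne_of_tarc h)
  exact χ.G.shared_out _ ⟨hx, χ.emb.vmap_mem u h.2.1⟩ z hz.1

end GraphHelpers

section RelabelHelpers

@[simp] lemma relabel_G (χ : CStruct V Λ) (g : V ⊕ Λ → V ⊕ Λ) :
    (χ.relabel g).G = χ.G := rfl

@[simp] lemma relabel_emb (χ : CStruct V Λ) (g : V ⊕ Λ → V ⊕ Λ) :
    (χ.relabel g).emb = χ.emb := rfl

@[simp] lemma relabel_ι (χ : CStruct V Λ) (g : V ⊕ Λ → V ⊕ Λ) (v : V) :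
    (χ.relabel g).ι v = g (χ.ι v) := rfl

end RelabelHelpers

section RedundancyHelpers

variable {χ : CStruct V Λ} {y : Λ} {u v : V}

lemma ArcRedundant.arc (h : ArcRedundant χ y u v) : χ.G.Arc u v := by
  rcases h with h | h
  · exact h.1.1
  · exact h.1.1

lemma ArcRedundant.src (h : ArcRedundant χ y u v) : χ.ι u = Sum.inr y := by
  rcases h with h | h <;> exact h.2.1

lemma ArcRedundant.tgt (h : ArcRedundant χ y u v) : χ.ι v = Sum.inr y := by
  rcases h with h | h <;> exact h.2.2.1

lemma VertRedundant.label (h : VertRedundant χ y v) : χ.ι v = Sum.inr y := by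
  rcases h with h | h <;> exact h.2.1

lemma VertRedundant.mem (h : VertRedundant χ y v) : v ∈ χ.G.verts := by
  rcases h with h | h
  · exact χ.G.VT_subset h.1
  · exact χ.G.VN_subset h.1

lemma VertRedundant.arc_out (h : VertRedundant χ y v) (ha : χ.G.Arc v u) :
    ArcRedundant χ y v u := by
  rcases h with h | h
  · exact h.2.2.2.2.1 u ha
  · exact h.2.2.2.1 u ha

lemma VertRedundant.arc_in (h : VertRedundant χ y v) (ha : χ.G.Arc u v) :
    ArcRedundant χ y u v := by
  rcases h with h | h
  · exact h.2.2.2.1 u ha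
  · exact h.2.2.1 u ha

lemma arcRed_of_tarc (hT : χ.G.TArc u v) (h : ArcRedundant χ y u v) :
    TArcRedundant χ y u v := by
  rcases h with h | h
  · exact h
  · exact (χ.G.shared_out u ⟨hT.2.1, h.1.2.1⟩ v hT.1).elim

end RedundancyHelpers

section TransferHelpers

variable {χ : CStruct V Λ} {f1 f2 : V ⊕ Λ → V ⊕ Λ} {y1 y2 : Λ}

lemma transfer_tarc (hpt : ∀ z ∈ χ.G.verts, f1 (χ.ι z) = Sum.inr y1 → f2 (χ.ι z) = Sum.inr y2)
    {u v : V} (h : TArcRedundant (χ.relabel f1) y1 u v) :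
    TArcRedundant (χ.relabel f2) y2 u v := by
  obtain ⟨hT, hu, hv, hp⟩ := h
  exact ⟨hT, hpt u (χ.G.VT_subset hT.2.1) hu, hpt v (χ.G.VT_subset hT.2.2) hv,
    fun z hz => hpt z (χ.G.VN_subset (pmap_mem_VN (χ := χ) hT hz)) (hp z hz)⟩

lemma transfer_narc (hpt : ∀ z ∈ χ.G.verts, f1 (χ.ι z) = Sum.inr y1 → f2 (χ.ι z) = Sum.inr y2)
    {u v : V} (h : NArcRedundant (χ.relabel f1) y1 u v) :
    NArcRedundant (χ.relabel f2) y2 u v := by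
  obtain ⟨hN, hu, hv, hcl⟩ := h
  exact ⟨hN, hpt u (χ.G.VN_subset hN.2.1) hu, hpt v (χ.G.VN_subset hN.2.2) hv,
    fun a b hT harc => transfer_tarc hpt (hcl a b hT harc)⟩

lemma transfer_arc (hpt : ∀ z ∈ χ.G.verts, f1 (χ.ι z) = Sum.inr y1 → f2 (χ.ι z) = Sum.inr y2)
    {u v : V} (h : ArcRedundant (χ.relabel f1) y1 u v) :
    ArcRedundant (χ.relabel f2) y2 u v := by
  rcases h with h | h
  · exact Or.inl (transfer_tarc hpt h)
  · exact Or.inr (transfer_narc hpt h)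

lemma transfer_tvert (hpt : ∀ z ∈ χ.G.verts, f1 (χ.ι z) = Sum.inr y1 → f2 (χ.ι z) = Sum.inr y2)
    {v : V} (h : TVertRedundant (χ.relabel f1) y1 v) :
    TVertRedundant (χ.relabel f2) y2 v := by
  obtain ⟨hm, h2, h3, h4, h5, h6, h7⟩ := h
  exact ⟨hm, hpt v (χ.G.VT_subset hm) h2,
    hpt _ (χ.G.VN_subset (χ.emb.vmap_mem v hm)) h3,
    fun u ha => transfer_arc hpt (h4 u ha), fun u ha => transfer_arc hpt (h5 u ha),
    fun u ha => transfer_arc hpt (h6 u ha), fun u ha => transfer_arc hpt (h7 u ha)⟩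

lemma transfer_nvert (hpt : ∀ z ∈ χ.G.verts, f1 (χ.ι z) = Sum.inr y1 → f2 (χ.ι z) = Sum.inr y2)
    {v : V} (h : NVertRedundant (χ.relabel f1) y1 v) :
    NVertRedundant (χ.relabel f2) y2 v := by
  obtain ⟨hm, h2, h3, h4, h5⟩ := h
  exact ⟨hm, hpt v (χ.G.VN_subset hm) h2,
    fun u ha => transfer_arc hpt (h3 u ha), fun u ha => transfer_arc hpt (h4 u ha),
    fun w hw hvm => transfer_tvert hpt (h5 w hw hvm)⟩

lemma transfer_vert (hpt : ∀ z ∈ χ.G.verts, f1 (χ.ι z) = Sum.inr y1 → f2 (χ.ι z) = Sum.inr y2)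
    {v : V} (h : VertRedundant (χ.relabel f1) y1 v) :
    VertRedundant (χ.relabel f2) y2 v := by
  rcases h with h | h
  · exact Or.inl (transfer_tvert hpt h)
  · exact Or.inr (transfer_nvert hpt h)

end TransferHelpers

section PsiHelpers

variable {Din : DispGraph V} {L R S : Set V} {ψ : CStruct V Lab}

lemma psi_lab (hψ : IsCS Din (L ∪ R ∪ S) ({Lab.future} : Set Lab) ψ) :
    ∀ v ∈ ψ.G.verts,
      (∃ s ∈ L ∪ R ∪ S, ψ.ι v = Sum.inl s) ∨ ψ.ι v = Sum.inr Lab.future := by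
  intro v hv
  rcases hψ.1.1 v hv with h | ⟨y, hy, h⟩
  · exact Or.inl h
  · rcases Set.mem_singleton_iff.mp hy with rfl
    exact Or.inr h

lemma comp_point (hψ : IsCS Din (L ∪ R ∪ S) ({Lab.future} : Set Lab) ψ) :
    ∀ v ∈ ψ.G.verts,
      sendVerts (L ∪ R) Lab.past (ψ.ι v)
        = sendLabs {Lab.left, Lab.right} Lab.past
            (sendVerts2 L Lab.left R Lab.right (ψ.ι v)) := by
  intro v hv
  rcases psi_lab hψ v hv with ⟨s, _, h⟩ | h <;> rw [h]
  · by_cases hL : s ∈ L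
    · simp [sendVerts, sendVerts2, sendLabs, hL, Set.mem_union]
    · by_cases hR : s ∈ R
      · simp [sendVerts, sendVerts2, sendLabs, hL, hR, Set.mem_union]
      · simp [sendVerts, sendVerts2, sendLabs, hL, hR, Set.mem_union]
  · simp [sendVerts, sendVerts2, sendLabs]

lemma g1_label (hψ : IsCS Din (L ∪ R ∪ S) ({Lab.future} : Set Lab) ψ)
    {z : V} {y : Lab} (hz : z ∈ ψ.G.verts)
    (h : sendVerts2 L Lab.left R Lab.right (ψ.ι z) = Sum.inr y) :
    ((y = Lab.left ∨ y = Lab.right) ∧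
      sendVerts (L ∪ R) Lab.past (ψ.ι z) = Sum.inr Lab.past)
    ∨ (y = Lab.future ∧ ψ.ι z = Sum.inr Lab.future) := by
  rcases psi_lab hψ z hz with ⟨s, _, hl⟩ | hl <;> rw [hl] at h ⊢
  · by_cases hL : s ∈ L
    · simp only [sendVerts2, hL, if_pos] at h
      obtain rfl : Lab.left = y := by simpa using h
      exact Or.inl ⟨Or.inl rfl, by simp [sendVerts, Set.mem_union, hL]⟩
    · by_cases hR : s ∈ R
      · simp only [sendVerts2, hL, if_neg, if_pos hR, ite_false] at h
        obtain rfl : Lab.right = y := by simpa using h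
        exact Or.inl ⟨Or.inr rfl, by simp [sendVerts, Set.mem_union, hR]⟩
      · simp [sendVerts2, hL, hR] at h
  · obtain rfl : Lab.future = y := by simpa [sendVerts2] using h
    exact Or.inr ⟨rfl, rfl⟩

lemma g_label (hψ : IsCS Din (L ∪ R ∪ S) ({Lab.future} : Set Lab) ψ)
    {z : V} {y : Lab} (hz : z ∈ ψ.G.verts)
    (h : sendVerts (L ∪ R) Lab.past (ψ.ι z) = Sum.inr y) :
    (y = Lab.past ∧ ∃ y', (y' = Lab.left ∨ y' = Lab.right) ∧
        sendVerts2 L Lab.left R Lab.right (ψ.ι z) = Sum.inr y')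
    ∨ (y = Lab.future ∧ ψ.ι z = Sum.inr Lab.future) := by
  rcases psi_lab hψ z hz with ⟨s, _, hl⟩ | hl <;> rw [hl] at h ⊢
  · by_cases hLR : s ∈ L ∪ R
    · obtain rfl : Lab.past = y := by simpa [sendVerts, hLR] using h
      rcases (Set.mem_union ..).mp hLR with hL | hR
      · exact Or.inl ⟨rfl, Lab.left, Or.inl rfl, by simp [sendVerts2, hL]⟩
      · by_cases hL : s ∈ L
        · exact Or.inl ⟨rfl, Lab.left, Or.inl rfl, by simp [sendVerts2, hL]⟩
        · exact Or.inl ⟨rfl, Lab.right, Or.inr rfl, by simp [sendVerts2, hL, hR]⟩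
    · simp [sendVerts, hLR] at h
  · obtain rfl : Lab.future = y := by simpa [sendVerts] using h
    exact Or.inr ⟨rfl, rfl⟩

lemma g_future (hψ : IsCS Din (L ∪ R ∪ S) ({Lab.future} : Set Lab) ψ)
    {z : V} (hz : z ∈ ψ.G.verts)
    (h : sendVerts (L ∪ R) Lab.past (ψ.ι z) = Sum.inr Lab.future) :
    ψ.ι z = Sum.inr Lab.future := by
  rcases g_label hψ hz h with ⟨h1, -⟩ | ⟨-, h2⟩
  · exact absurd h1 (by decide)
  · exact h2

lemma g1_future (hψ : IsCS Din (L ∪ R ∪ S) ({Lab.future} : Set Lab) ψ)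
    {z : V} (hz : z ∈ ψ.G.verts)
    (h : sendVerts2 L Lab.left R Lab.right (ψ.ι z) = Sum.inr Lab.future) :
    ψ.ι z = Sum.inr Lab.future := by
  rcases g1_label hψ hz h with ⟨h1, -⟩ | ⟨-, h2⟩
  · rcases h1 with h1 | h1 <;> exact absurd h1 (by decide)
  · exact h2

lemma no_future_arc_aux (hwb : WellBehaved Din ({Lab.future} : Set Lab) ψ)
    {f : V ⊕ Lab → V ⊕ Lab}
    (hf : ∀ z ∈ ψ.G.verts, f (ψ.ι z) = Sum.inr Lab.future → ψ.ι z = Sum.inr Lab.future)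
    {u v : V} (h : ArcRedundant (ψ.relabel f) Lab.future u v) : False := by
  have h2 : ArcRedundant (ψ.relabel id) Lab.future u v :=
    transfer_arc (fun z hz hz1 => hf z hz hz1) h
  have h3 : ArcRedundant ψ Lab.future u v := h2
  exact hwb.1 u v h3.arc ⟨Lab.future, rfl, h3⟩

lemma no_future_vert_aux (hwb : WellBehaved Din ({Lab.future} : Set Lab) ψ)
    {f : V ⊕ Lab → V ⊕ Lab}
    (hf : ∀ z ∈ ψ.G.verts, f (ψ.ι z) = Sum.inr Lab.future → ψ.ι z = Sum.inr Lab.future)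
    {v : V} (h : VertRedundant (ψ.relabel f) Lab.future v) : False := by
  have h2 : VertRedundant (ψ.relabel id) Lab.future v :=
    transfer_vert (fun z hz hz1 => hf z hz hz1) h
  have h3 : VertRedundant ψ Lab.future v := h2
  exact hwb.2.1 v h3.mem ⟨Lab.future, rfl, h3⟩

lemma ared1_lr (hψ : IsCS Din (L ∪ R ∪ S) ({Lab.future} : Set Lab) ψ)
    (hwb : WellBehaved Din ({Lab.future} : Set Lab) ψ) {u v : V} {y : Lab}
    (h : ArcRedundant (ψ.relabel (sendVerts2 L Lab.left R Lab.right)) y u v) :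
    y = Lab.left ∨ y = Lab.right := by
  have hu : u ∈ ψ.G.verts := ψ.G.arc_left h.arc
  rcases g1_label hψ hu h.src with ⟨hy, -⟩ | ⟨rfl, -⟩
  · exact hy
  · exact absurd h (no_future_arc_aux hwb (fun z hz => g1_future hψ hz))

lemma aredG_past (hψ : IsCS Din (L ∪ R ∪ S) ({Lab.future} : Set Lab) ψ)
    (hwb : WellBehaved Din ({Lab.future} : Set Lab) ψ) {u v : V} {y : Lab}
    (h : ArcRedundant (ψ.relabel (sendVerts (L ∪ R) Lab.past)) y u v) :
    y = Lab.past := by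
  have hu : u ∈ ψ.G.verts := ψ.G.arc_left h.arc
  rcases g_label hψ hu h.src with ⟨hy, -⟩ | ⟨rfl, -⟩
  · exact hy
  · exact absurd h (no_future_arc_aux hwb (fun z hz => g_future hψ hz))

lemma red1_lr (hψ : IsCS Din (L ∪ R ∪ S) ({Lab.future} : Set Lab) ψ)
    (hwb : WellBehaved Din ({Lab.future} : Set Lab) ψ) {v : V} {y : Lab}
    (h : VertRedundant (ψ.relabel (sendVerts2 L Lab.left R Lab.right)) y v) :
    y = Lab.left ∨ y = Lab.right := by
  rcases g1_label hψ h.mem h.label with ⟨hy, -⟩ | ⟨rfl, -⟩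
  · exact hy
  · exact absurd h (no_future_vert_aux hwb (fun z hz => g1_future hψ hz))

lemma redG_past (hψ : IsCS Din (L ∪ R ∪ S) ({Lab.future} : Set Lab) ψ)
    (hwb : WellBehaved Din ({Lab.future} : Set Lab) ψ) {v : V} {y : Lab}
    (h : VertRedundant (ψ.relabel (sendVerts (L ∪ R) Lab.past)) y v) :
    y = Lab.past := by
  rcases g_label hψ h.mem h.label with ⟨hy, -⟩ | ⟨rfl, -⟩
  · exact hy
  · exact absurd h (no_future_vert_aux hwb (fun z hz => g_future hψ hz))

lemma hpt_1G (hψ : IsCS Din (L ∪ R ∪ S) ({Lab.future} : Set Lab) ψ)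
    {y : Lab} (hy : y = Lab.left ∨ y = Lab.right) :
    ∀ z ∈ ψ.G.verts, sendVerts2 L Lab.left R Lab.right (ψ.ι z) = Sum.inr y →
      sendVerts (L ∪ R) Lab.past (ψ.ι z) = Sum.inr Lab.past := by
  intro z hz h1
  rcases g1_label hψ hz h1 with ⟨-, h2⟩ | ⟨rfl, -⟩
  · exact h2
  · rcases hy with h | h <;> exact absurd h (by decide)

lemma ared1_to_aredG (hψ : IsCS Din (L ∪ R ∪ S) ({Lab.future} : Set Lab) ψ)
    (hwb : WellBehaved Din ({Lab.future} : Set Lab) ψ) {u v : V} {y : Lab}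
    (h : ArcRedundant (ψ.relabel (sendVerts2 L Lab.left R Lab.right)) y u v) :
    ArcRedundant (ψ.relabel (sendVerts (L ∪ R) Lab.past)) Lab.past u v :=
  transfer_arc (hpt_1G hψ (ared1_lr hψ hwb h)) h

lemma tarcred1_to_G (hψ : IsCS Din (L ∪ R ∪ S) ({Lab.future} : Set Lab) ψ)
    (hwb : WellBehaved Din ({Lab.future} : Set Lab) ψ) {u v : V} {y : Lab}
    (h : TArcRedundant (ψ.relabel (sendVerts2 L Lab.left R Lab.right)) y u v) :
    TArcRedundant (ψ.relabel (sendVerts (L ∪ R) Lab.past)) Lab.past u v :=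
  transfer_tarc (hpt_1G hψ (ared1_lr hψ hwb (Or.inl h))) h

lemma tvertred1_to_G (hψ : IsCS Din (L ∪ R ∪ S) ({Lab.future} : Set Lab) ψ)
    (hwb : WellBehaved Din ({Lab.future} : Set Lab) ψ) {v : V} {y : Lab}
    (h : TVertRedundant (ψ.relabel (sendVerts2 L Lab.left R Lab.right)) y v) :
    TVertRedundant (ψ.relabel (sendVerts (L ∪ R) Lab.past)) Lab.past v :=
  transfer_tvert (hpt_1G hψ (red1_lr hψ hwb (Or.inl h))) h

lemma red1_to_redG (hψ : IsCS Din (L ∪ R ∪ S) ({Lab.future} : Set Lab) ψ)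
    (hwb : WellBehaved Din ({Lab.future} : Set Lab) ψ) {v : V} {y : Lab}
    (h : VertRedundant (ψ.relabel (sendVerts2 L Lab.left R Lab.right)) y v) :
    VertRedundant (ψ.relabel (sendVerts (L ∪ R) Lab.past)) Lab.past v :=
  transfer_vert (hpt_1G hψ (red1_lr hψ hwb h)) h

end PsiHelpers

section MuHelpers

variable {Din : DispGraph V} {L R S : Set V} {ψ μ : CStruct V Lab}

lemma g2_lr {y y' : Lab} (hy' : y' = Lab.left ∨ y' = Lab.right)
    (h : sendLabs {Lab.left, Lab.right} Lab.past (Sum.inr y') = (Sum.inr y : V ⊕ Lab)) :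
    y = Lab.past := by
  rcases hy' with rfl | rfl <;>
    · simp only [sendLabs, Set.mem_insert_iff, Set.mem_singleton_iff, true_or, or_true,
        if_pos] at h
      exact (Sum.inr.injEq .. ▸ h).symm

lemma nonred_src {y : Lab} {u v : V} (hA : ψ.G.Arc u v)
    (hn : ¬ ∃ y, ArcRedundant (ψ.relabel (sendVerts2 L Lab.left R Lab.right)) y u v)
    (h : VertRedundant (ψ.relabel (sendVerts2 L Lab.left R Lab.right)) y u) : False :=
  hn ⟨y, h.arc_out hA⟩

lemma nonred_tgt {y : Lab} {u v : V} (hA : ψ.G.Arc u v)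
    (hn : ¬ ∃ y, ArcRedundant (ψ.relabel (sendVerts2 L Lab.left R Lab.right)) y u v)
    (h : VertRedundant (ψ.relabel (sendVerts2 L Lab.left R Lab.right)) y v) : False :=
  hn ⟨y, h.arc_in hA⟩

/-- Arcs on the embedding path of a surviving tree arc are network arcs and survive. -/
lemma psi_path_arcs {u v a b : V} (hT : ψ.G.TArc u v)
    (hnr : ¬ ∃ y, ArcRedundant (ψ.relabel (sendVerts2 L Lab.left R Lab.right)) y u v)
    (hab : IsArcOf (ψ.emb.pmap u v) a b) :
    ψ.G.NArc a b ∧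
      ¬ ∃ y, ArcRedundant (ψ.relabel (sendVerts2 L Lab.left R Lab.right)) y a b := by
  have hN := pmap_arc hT hab
  refine ⟨hN, ?_⟩
  rintro ⟨y, hTr | hNr⟩
  · exact ψ.G.shared_out a ⟨hTr.1.2.1, hN.2.1⟩ b hN.1
  · exact hnr ⟨y, Or.inl (hNr.2.2.2 u v hT hab)⟩

/-- Vertices on the embedding path of a surviving tree arc survive. -/
lemma psi_path_verts {u v z : V} (hT : ψ.G.TArc u v)
    (hnr : ¬ ∃ y, ArcRedundant (ψ.relabel (sendVerts2 L Lab.left R Lab.right)) y u v)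
    (hz : z ∈ ψ.emb.pmap u v) :
    z ∈ ψ.G.VN ∧
      ¬ ∃ y, VertRedundant (ψ.relabel (sendVerts2 L Lab.left R Lab.right)) y z := by
  rcases exists_arc_of_mem (pmap_two hT) hz with ⟨w, hw⟩ | ⟨w, hw⟩
  · obtain ⟨hN, hn⟩ := psi_path_arcs hT hnr hw
    exact ⟨hN.2.1, fun ⟨y, hy⟩ => nonred_src hN.1 hn hy⟩
  · obtain ⟨hN, hn⟩ := psi_path_arcs hT hnr hw
    exact ⟨hN.2.2, fun ⟨y, hy⟩ => nonred_tgt hN.1 hn hy⟩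

section WithR1

variable {hdummy : True}

lemma mu_sub (hR1 : IsRestrictionOf (sendVerts2 L Lab.left R Lab.right) μ ψ) : μ.G.verts ⊆ ψ.G.verts := by
  rw [hR1.1]; exact Set.diff_subset

lemma mem_mu_iff (hR1 : IsRestrictionOf (sendVerts2 L Lab.left R Lab.right) μ ψ) {z : V} :
    z ∈ μ.G.verts ↔ z ∈ ψ.G.verts ∧
      ¬ ∃ y, VertRedundant (ψ.relabel (sendVerts2 L Lab.left R Lab.right)) y z := by
  rw [hR1.1]; exact Iff.rfl

lemma mu_tarc (hR1 : IsRestrictionOf (sendVerts2 L Lab.left R Lab.right) μ ψ) {u v : V} (hT : μ.G.TArc u v) :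
    ψ.G.TArc u v ∧
      ¬ ∃ y, ArcRedundant (ψ.relabel (sendVerts2 L Lab.left R Lab.right)) y u v := by
  have h1 := (hR1.2.1 u v).mp hT.1
  have hu : u ∈ μ.G.VT := hT.2.1
  have hv : v ∈ μ.G.VT := hT.2.2
  rw [hR1.2.2.1] at hu hv
  exact ⟨⟨h1.1, hu.1, hv.1⟩, h1.2⟩

lemma mu_narc (hR1 : IsRestrictionOf (sendVerts2 L Lab.left R Lab.right) μ ψ) {a b : V} (hN : μ.G.NArc a b) :
    ψ.G.NArc a b ∧
      ¬ ∃ y, ArcRedundant (ψ.relabel (sendVerts2 L Lab.left R Lab.right)) y a b := by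
  have h1 := (hR1.2.1 a b).mp hN.1
  have hu : a ∈ μ.G.VN := hN.2.1
  have hv : b ∈ μ.G.VN := hN.2.2
  rw [hR1.2.2.2.1] at hu hv
  exact ⟨⟨h1.1, hu.1, hv.1⟩, h1.2⟩

lemma mu_pmap_mem (hR1 : IsRestrictionOf (sendVerts2 L Lab.left R Lab.right) μ ψ) {u v z : V} (hT : μ.G.TArc u v) (hz : z ∈ ψ.emb.pmap u v) :
    z ∈ μ.G.verts := by
  obtain ⟨hψT, hnr⟩ := mu_tarc hR1 hT
  obtain ⟨hVN, hnv⟩ := psi_path_verts hψT hnr hz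
  exact (mem_mu_iff hR1).mpr ⟨ψ.G.VN_subset hVN, hnv⟩

lemma mu_pmap_eq (hR1 : IsRestrictionOf (sendVerts2 L Lab.left R Lab.right) μ ψ) {u v : V} (hT : μ.G.TArc u v) : μ.emb.pmap u v = ψ.emb.pmap u v :=
  hR1.2.2.2.2.2.1 u v hT

lemma mu_vmap_eq (hR1 : IsRestrictionOf (sendVerts2 L Lab.left R Lab.right) μ ψ) {v : V} (hv : v ∈ μ.G.VT) : μ.emb.vmap v = ψ.emb.vmap v :=
  hR1.2.2.2.2.1 v hv

lemma mu_vmap_mem (hR1 : IsRestrictionOf (sendVerts2 L Lab.left R Lab.right) μ ψ) {v : V} (hv : v ∈ μ.G.VT) : ψ.emb.vmap v ∈ μ.G.verts := by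
  have h := μ.emb.vmap_mem v hv
  rw [mu_vmap_eq hR1 hv] at h
  exact μ.G.VN_subset h

lemma mu_arc_psi (hR1 : IsRestrictionOf (sendVerts2 L Lab.left R Lab.right) μ ψ) {u v : V} (h : μ.G.Arc u v) : ψ.G.Arc u v := ((hR1.2.1 u v).mp h).1

lemma K4 (hR1 : IsRestrictionOf (sendVerts2 L Lab.left R Lab.right) μ ψ)
    (hψ : IsCS Din (L ∪ R ∪ S) ({Lab.future} : Set Lab) ψ) {z : V} (hz : z ∈ μ.G.verts) :
    sendLabs {Lab.left, Lab.right} Lab.past (μ.ι z)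
      = sendVerts (L ∪ R) Lab.past (ψ.ι z) := by
  rw [hR1.2.2.2.2.2.2 z hz, ← comp_point hψ z (mu_sub hR1 hz)]

lemma c_tarc_bwd (hR1 : IsRestrictionOf (sendVerts2 L Lab.left R Lab.right) μ ψ)
    (hψ : IsCS Din (L ∪ R ∪ S) ({Lab.future} : Set Lab) ψ) {u v : V} {y : Lab}
    (h : TArcRedundant (μ.relabel (sendLabs {Lab.left, Lab.right} Lab.past)) y u v) :
    TArcRedundant (ψ.relabel (sendVerts (L ∪ R) Lab.past)) y u v := by
  obtain ⟨hT, hu, hv, hp⟩ := h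
  obtain ⟨hψT, hnr⟩ := mu_tarc hR1 hT
  have hpe := mu_pmap_eq hR1 hT
  refine ⟨hψT, ?_, ?_, ?_⟩
  · rw [relabel_ι, ← K4 hR1 hψ (μ.G.VT_subset hT.2.1)]; exact hu
  · rw [relabel_ι, ← K4 hR1 hψ (μ.G.VT_subset hT.2.2)]; exact hv
  · intro z hz
    have hz' : z ∈ μ.emb.pmap u v := by rw [hpe]; exact hz
    rw [relabel_ι, ← K4 hR1 hψ (mu_pmap_mem hR1 hT hz)]
    exact hp z hz'

lemma c_narc_bwd (hR1 : IsRestrictionOf (sendVerts2 L Lab.left R Lab.right) μ ψ)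
    (hψ : IsCS Din (L ∪ R ∪ S) ({Lab.future} : Set Lab) ψ)
    (hwb : WellBehaved Din ({Lab.future} : Set Lab) ψ) {a b : V} {y : Lab}
    (h : NArcRedundant (μ.relabel (sendLabs {Lab.left, Lab.right} Lab.past)) y a b) :
    NArcRedundant (ψ.relabel (sendVerts (L ∪ R) Lab.past)) y a b := by
  obtain ⟨hN, ha, hb, hcl⟩ := h
  obtain ⟨hψN, hnr⟩ := mu_narc hR1 hN
  have haM : a ∈ μ.G.verts := μ.G.VN_subset hN.2.1
  have hbM : b ∈ μ.G.verts := μ.G.VN_subset hN.2.2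
  refine ⟨hψN, by rw [relabel_ι, ← K4 hR1 hψ haM]; exact ha, by rw [relabel_ι, ← K4 hR1 hψ hbM]; exact hb, ?_⟩
  intro u' v' hT' harc'
  by_cases h1 : ∃ y', ArcRedundant (ψ.relabel (sendVerts2 L Lab.left R Lab.right)) y' u' v'
  · obtain ⟨y', hred⟩ := h1
    have hTred := arcRed_of_tarc (χ := ψ.relabel (sendVerts2 L Lab.left R Lab.right))
      hT' hred
    have hpast := tarcred1_to_G hψ hwb hTred
    -- determine `y = Lab.past` using the label of `a` on the path
    have hamem : a ∈ ψ.emb.pmap u' v' := isArcOf_mem_left harc'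
    have h2 : sendVerts (L ∪ R) Lab.past (ψ.ι a) = Sum.inr Lab.past :=
      hpast.2.2.2 a hamem
    have h3 : sendVerts (L ∪ R) Lab.past (ψ.ι a) = Sum.inr y := by
      rw [← K4 hR1 hψ haM]; exact ha
    have : y = Lab.past := by rw [h2] at h3; exact (Sum.inr.inj h3).symm
    rw [this]
    exact hpast
  · have hA' : ψ.G.Arc u' v' := hT'.1
    have hu'M : u' ∈ μ.G.verts :=
      (mem_mu_iff hR1).mpr ⟨ψ.G.VT_subset hT'.2.1, fun ⟨y', hy⟩ => nonred_src hA' h1 hy⟩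
    have hv'M : v' ∈ μ.G.verts :=
      (mem_mu_iff hR1).mpr ⟨ψ.G.VT_subset hT'.2.2, fun ⟨y', hy⟩ => nonred_tgt hA' h1 hy⟩
    have hμT : μ.G.TArc u' v' := by
      refine ⟨(hR1.2.1 u' v').mpr ⟨hA', h1⟩, ?_, ?_⟩
      · rw [hR1.2.2.1]; exact ⟨hT'.2.1, hu'M⟩
      · rw [hR1.2.2.1]; exact ⟨hT'.2.2, hv'M⟩
    have harcμ : IsArcOf (μ.emb.pmap u' v') a b := by
      rw [mu_pmap_eq hR1 hμT]; exact harc'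
    exact c_tarc_bwd hR1 hψ (hcl u' v' hμT harcμ)

lemma c_arc_bwd (hR1 : IsRestrictionOf (sendVerts2 L Lab.left R Lab.right) μ ψ)
    (hψ : IsCS Din (L ∪ R ∪ S) ({Lab.future} : Set Lab) ψ)
    (hwb : WellBehaved Din ({Lab.future} : Set Lab) ψ) {u v : V} {y : Lab}
    (h : ArcRedundant (μ.relabel (sendLabs {Lab.left, Lab.right} Lab.past)) y u v) :
    ArcRedundant (ψ.relabel (sendVerts (L ∪ R) Lab.past)) y u v := by
  rcases h with h | h
  · exact Or.inl (c_tarc_bwd hR1 hψ h)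
  · exact Or.inr (c_narc_bwd hR1 hψ hwb h)

lemma c_tarc_fwd (hR1 : IsRestrictionOf (sendVerts2 L Lab.left R Lab.right) μ ψ)
    (hψ : IsCS Din (L ∪ R ∪ S) ({Lab.future} : Set Lab) ψ) {u v : V}
    (hnr : ¬ ∃ y, ArcRedundant (ψ.relabel (sendVerts2 L Lab.left R Lab.right)) y u v)
    (h : TArcRedundant (ψ.relabel (sendVerts (L ∪ R) Lab.past)) Lab.past u v) :
    TArcRedundant (μ.relabel (sendLabs {Lab.left, Lab.right} Lab.past)) Lab.past u v := by
  obtain ⟨hT, hu, hv, hp⟩ := h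
  have hA' : ψ.G.Arc u v := hT.1
  have huM : u ∈ μ.G.verts :=
    (mem_mu_iff hR1).mpr ⟨ψ.G.VT_subset hT.2.1, fun ⟨y', hy⟩ => nonred_src hA' hnr hy⟩
  have hvM : v ∈ μ.G.verts :=
    (mem_mu_iff hR1).mpr ⟨ψ.G.VT_subset hT.2.2, fun ⟨y', hy⟩ => nonred_tgt hA' hnr hy⟩
  have hμT : μ.G.TArc u v := by
    refine ⟨(hR1.2.1 u v).mpr ⟨hA', hnr⟩, ?_, ?_⟩
    · rw [hR1.2.2.1]; exact ⟨hT.2.1, huM⟩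
    · rw [hR1.2.2.1]; exact ⟨hT.2.2, hvM⟩
  refine ⟨hμT, by rw [relabel_ι, K4 hR1 hψ huM]; exact hu, by rw [relabel_ι, K4 hR1 hψ hvM]; exact hv, ?_⟩
  intro z hz
  simp only [relabel_emb] at hz
  rw [mu_pmap_eq hR1 hμT] at hz
  rw [relabel_ι, K4 hR1 hψ (mu_pmap_mem hR1 hμT hz)]
  exact hp z hz

lemma c_narc_fwd (hR1 : IsRestrictionOf (sendVerts2 L Lab.left R Lab.right) μ ψ)
    (hψ : IsCS Din (L ∪ R ∪ S) ({Lab.future} : Set Lab) ψ) {a b : V}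
    (hnr : ¬ ∃ y, ArcRedundant (ψ.relabel (sendVerts2 L Lab.left R Lab.right)) y a b)
    (h : NArcRedundant (ψ.relabel (sendVerts (L ∪ R) Lab.past)) Lab.past a b) :
    NArcRedundant (μ.relabel (sendLabs {Lab.left, Lab.right} Lab.past)) Lab.past a b := by
  obtain ⟨hN, ha, hb, hcl⟩ := h
  have hA' : ψ.G.Arc a b := hN.1
  have haM : a ∈ μ.G.verts :=
    (mem_mu_iff hR1).mpr ⟨ψ.G.VN_subset hN.2.1, fun ⟨y', hy⟩ => nonred_src hA' hnr hy⟩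
  have hbM : b ∈ μ.G.verts :=
    (mem_mu_iff hR1).mpr ⟨ψ.G.VN_subset hN.2.2, fun ⟨y', hy⟩ => nonred_tgt hA' hnr hy⟩
  have hμN : μ.G.NArc a b := by
    refine ⟨(hR1.2.1 a b).mpr ⟨hA', hnr⟩, ?_, ?_⟩
    · rw [hR1.2.2.2.1]; exact ⟨hN.2.1, haM⟩
    · rw [hR1.2.2.2.1]; exact ⟨hN.2.2, hbM⟩
  refine ⟨hμN, by rw [relabel_ι, K4 hR1 hψ haM]; exact ha, by rw [relabel_ι, K4 hR1 hψ hbM]; exact hb, ?_⟩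
  intro u' v' hμT harc'
  obtain ⟨hψT, hnr'⟩ := mu_tarc hR1 hμT
  simp only [relabel_emb] at harc'
  rw [mu_pmap_eq hR1 hμT] at harc'
  exact c_tarc_fwd hR1 hψ hnr' (hcl u' v' hψT harc')

lemma c_arc_fwd (hR1 : IsRestrictionOf (sendVerts2 L Lab.left R Lab.right) μ ψ)
    (hψ : IsCS Din (L ∪ R ∪ S) ({Lab.future} : Set Lab) ψ) {u v : V}
    (hnr : ¬ ∃ y, ArcRedundant (ψ.relabel (sendVerts2 L Lab.left R Lab.right)) y u v)
    (h : ArcRedundant (ψ.relabel (sendVerts (L ∪ R) Lab.past)) Lab.past u v) :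
    ArcRedundant (μ.relabel (sendLabs {Lab.left, Lab.right} Lab.past)) Lab.past u v := by
  rcases h with h | h
  · exact Or.inl (c_tarc_fwd hR1 hψ hnr h)
  · exact Or.inr (c_narc_fwd hR1 hψ hnr h)

lemma c_tvert_fwd (hR1 : IsRestrictionOf (sendVerts2 L Lab.left R Lab.right) μ ψ)
    (hψ : IsCS Din (L ∪ R ∪ S) ({Lab.future} : Set Lab) ψ) {v : V}
    (hvM : v ∈ μ.G.verts)
    (h : TVertRedundant (ψ.relabel (sendVerts (L ∪ R) Lab.past)) Lab.past v) :
    TVertRedundant (μ.relabel (sendLabs {Lab.left, Lab.right} Lab.past)) Lab.past v := by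
  obtain ⟨hVT, h2, h3, h4, h5, h6, h7⟩ := h
  have hμVT : v ∈ μ.G.VT := by rw [hR1.2.2.1]; exact ⟨hVT, hvM⟩
  have hveq := mu_vmap_eq hR1 hμVT
  have hxM := mu_vmap_mem hR1 hμVT
  refine ⟨hμVT, ?_, ?_, ?_, ?_, ?_, ?_⟩
  · rw [relabel_ι, K4 hR1 hψ hvM]; exact h2
  · simp only [relabel_emb, relabel_ι]
    rw [hveq, K4 hR1 hψ hxM]; exact h3
  · intro u ha
    have hμa : μ.G.Arc u v := ha
    exact c_arc_fwd hR1 hψ ((hR1.2.1 u v).mp hμa).2 (h4 u (mu_arc_psi hR1 hμa))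
  · intro u ha
    have hμa : μ.G.Arc v u := ha
    exact c_arc_fwd hR1 hψ ((hR1.2.1 v u).mp hμa).2 (h5 u (mu_arc_psi hR1 hμa))
  · intro u ha
    simp only [relabel_emb] at ha ⊢
    rw [hveq] at ha ⊢
    have hμa : μ.G.Arc u (ψ.emb.vmap v) := ha
    exact c_arc_fwd hR1 hψ ((hR1.2.1 u _).mp hμa).2 (h6 u (mu_arc_psi hR1 hμa))
  · intro u ha
    simp only [relabel_emb] at ha ⊢
    rw [hveq] at ha ⊢
    have hμa : μ.G.Arc (ψ.emb.vmap v) u := ha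
    exact c_arc_fwd hR1 hψ ((hR1.2.1 _ u).mp hμa).2 (h7 u (mu_arc_psi hR1 hμa))

lemma c_nvert_fwd (hR1 : IsRestrictionOf (sendVerts2 L Lab.left R Lab.right) μ ψ)
    (hψ : IsCS Din (L ∪ R ∪ S) ({Lab.future} : Set Lab) ψ) {v : V}
    (hvM : v ∈ μ.G.verts)
    (h : NVertRedundant (ψ.relabel (sendVerts (L ∪ R) Lab.past)) Lab.past v) :
    NVertRedundant (μ.relabel (sendLabs {Lab.left, Lab.right} Lab.past)) Lab.past v := by
  obtain ⟨hVN, h2, h3, h4, h5⟩ := h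
  have hμVN : v ∈ μ.G.VN := by rw [hR1.2.2.2.1]; exact ⟨hVN, hvM⟩
  refine ⟨hμVN, ?_, ?_, ?_, ?_⟩
  · rw [relabel_ι, K4 hR1 hψ hvM]; exact h2
  · intro u ha
    have hμa : μ.G.Arc u v := ha
    exact c_arc_fwd hR1 hψ ((hR1.2.1 u v).mp hμa).2 (h3 u (mu_arc_psi hR1 hμa))
  · intro u ha
    have hμa : μ.G.Arc v u := ha
    exact c_arc_fwd hR1 hψ ((hR1.2.1 v u).mp hμa).2 (h4 u (mu_arc_psi hR1 hμa))
  · intro w hw hvm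
    have hμw : w ∈ μ.G.VT := hw
    have hψw : w ∈ ψ.G.VT := by
      have := hμw; rw [hR1.2.2.1] at this; exact this.1
    have hwM : w ∈ μ.G.verts := μ.G.VT_subset hμw
    have hvm' : ψ.emb.vmap w = v := by
      rw [← mu_vmap_eq hR1 hμw]; exact hvm
    exact c_tvert_fwd hR1 hψ hwM (h5 w hψw hvm')

lemma c_vert_fwd (hR1 : IsRestrictionOf (sendVerts2 L Lab.left R Lab.right) μ ψ)
    (hψ : IsCS Din (L ∪ R ∪ S) ({Lab.future} : Set Lab) ψ) {v : V}
    (hvM : v ∈ μ.G.verts)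
    (h : VertRedundant (ψ.relabel (sendVerts (L ∪ R) Lab.past)) Lab.past v) :
    VertRedundant (μ.relabel (sendLabs {Lab.left, Lab.right} Lab.past)) Lab.past v := by
  rcases h with h | h
  · exact Or.inl (c_tvert_fwd hR1 hψ hvM h)
  · exact Or.inr (c_nvert_fwd hR1 hψ hvM h)

lemma c_tvert_bwd (hR1 : IsRestrictionOf (sendVerts2 L Lab.left R Lab.right) μ ψ)
    (hψ : IsCS Din (L ∪ R ∪ S) ({Lab.future} : Set Lab) ψ)
    (hwb : WellBehaved Din ({Lab.future} : Set Lab) ψ) {v : V} {y : Lab}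
    (h : TVertRedundant (μ.relabel (sendLabs {Lab.left, Lab.right} Lab.past)) y v) :
    TVertRedundant (ψ.relabel (sendVerts (L ∪ R) Lab.past)) y v := by
  obtain ⟨hVT, h2, h3, h4, h5, h6, h7⟩ := h
  have hμVT : v ∈ μ.G.VT := hVT
  have hψVT : v ∈ ψ.G.VT := by
    have := hμVT; rw [hR1.2.2.1] at this; exact this.1
  have hvM : v ∈ μ.G.verts := μ.G.VT_subset hμVT
  have hveq := mu_vmap_eq hR1 hμVT
  have hxM := mu_vmap_mem hR1 hμVT
  have hιv := hR1.2.2.2.2.2.2 v hvM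
  have hιx := hR1.2.2.2.2.2.2 _ hxM
  have h2' : sendLabs {Lab.left, Lab.right} Lab.past (μ.ι v) = Sum.inr y := h2
  have h3' : sendLabs {Lab.left, Lab.right} Lab.past (μ.ι (ψ.emb.vmap v)) = Sum.inr y := by
    rw [← hveq]; exact h3
  refine ⟨hψVT, ?_, ?_, ?_, ?_, ?_, ?_⟩
  · rw [relabel_ι, ← K4 hR1 hψ hvM]; exact h2
  · simp only [relabel_emb, relabel_ι]
    rw [← K4 hR1 hψ hxM]; exact h3'
  · intro u ha
    by_cases hnr : ∃ y', ArcRedundant (ψ.relabel (sendVerts2 L Lab.left R Lab.right)) y' u v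
    · obtain ⟨y', hy'⟩ := hnr
      have hlr := ared1_lr hψ hwb hy'
      have hval : sendVerts2 L Lab.left R Lab.right (ψ.ι v) = Sum.inr y' := hy'.tgt
      rw [hιv, hval] at h2'
      rw [g2_lr hlr h2']
      exact ared1_to_aredG hψ hwb hy'
    · exact c_arc_bwd hR1 hψ hwb (h4 u ((hR1.2.1 u v).mpr ⟨ha, hnr⟩))
  · intro u ha
    by_cases hnr : ∃ y', ArcRedundant (ψ.relabel (sendVerts2 L Lab.left R Lab.right)) y' v u
    · obtain ⟨y', hy'⟩ := hnr
      have hlr := ared1_lr hψ hwb hy'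
      have hval : sendVerts2 L Lab.left R Lab.right (ψ.ι v) = Sum.inr y' := hy'.src
      rw [hιv, hval] at h2'
      rw [g2_lr hlr h2']
      exact ared1_to_aredG hψ hwb hy'
    · exact c_arc_bwd hR1 hψ hwb (h5 u ((hR1.2.1 v u).mpr ⟨ha, hnr⟩))
  · intro u ha
    simp only [relabel_emb] at ha ⊢
    by_cases hnr : ∃ y', ArcRedundant (ψ.relabel (sendVerts2 L Lab.left R Lab.right)) y'
        u (ψ.emb.vmap v)
    · obtain ⟨y', hy'⟩ := hnr
      have hlr := ared1_lr hψ hwb hy'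
      have hval : sendVerts2 L Lab.left R Lab.right (ψ.ι (ψ.emb.vmap v)) = Sum.inr y' :=
        hy'.tgt
      rw [hιx, hval] at h3'
      rw [g2_lr hlr h3']
      exact ared1_to_aredG hψ hwb hy'
    · have hμa : μ.G.Arc u (μ.emb.vmap v) := by
        rw [hveq]; exact (hR1.2.1 u _).mpr ⟨ha, hnr⟩
      have hh := h6 u hμa
      simp only [relabel_emb] at hh
      rw [hveq] at hh
      exact c_arc_bwd hR1 hψ hwb hh
  · intro u ha
    simp only [relabel_emb] at ha ⊢
    by_cases hnr : ∃ y', ArcRedundant (ψ.relabel (sendVerts2 L Lab.left R Lab.right)) y'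
        (ψ.emb.vmap v) u
    · obtain ⟨y', hy'⟩ := hnr
      have hlr := ared1_lr hψ hwb hy'
      have hval : sendVerts2 L Lab.left R Lab.right (ψ.ι (ψ.emb.vmap v)) = Sum.inr y' :=
        hy'.src
      rw [hιx, hval] at h3'
      rw [g2_lr hlr h3']
      exact ared1_to_aredG hψ hwb hy'
    · have hμa : μ.G.Arc (μ.emb.vmap v) u := by
        rw [hveq]; exact (hR1.2.1 _ u).mpr ⟨ha, hnr⟩
      have hh := h7 u hμa
      simp only [relabel_emb] at hh
      rw [hveq] at hh
      exact c_arc_bwd hR1 hψ hwb hh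

lemma c_nvert_bwd (hR1 : IsRestrictionOf (sendVerts2 L Lab.left R Lab.right) μ ψ)
    (hψ : IsCS Din (L ∪ R ∪ S) ({Lab.future} : Set Lab) ψ)
    (hwb : WellBehaved Din ({Lab.future} : Set Lab) ψ) {v : V} {y : Lab}
    (h : NVertRedundant (μ.relabel (sendLabs {Lab.left, Lab.right} Lab.past)) y v) :
    NVertRedundant (ψ.relabel (sendVerts (L ∪ R) Lab.past)) y v := by
  obtain ⟨hVN, h2, h3, h4, h5⟩ := h
  have hμVN : v ∈ μ.G.VN := hVN
  have hψVN : v ∈ ψ.G.VN := by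
    have := hμVN; rw [hR1.2.2.2.1] at this; exact this.1
  have hvM : v ∈ μ.G.verts := μ.G.VN_subset hμVN
  have hιv := hR1.2.2.2.2.2.2 v hvM
  have h2' : sendLabs {Lab.left, Lab.right} Lab.past (μ.ι v) = Sum.inr y := h2
  refine ⟨hψVN, ?_, ?_, ?_, ?_⟩
  · rw [relabel_ι, ← K4 hR1 hψ hvM]; exact h2
  · intro u ha
    by_cases hnr : ∃ y', ArcRedundant (ψ.relabel (sendVerts2 L Lab.left R Lab.right)) y' u v
    · obtain ⟨y', hy'⟩ := hnr
      have hlr := ared1_lr hψ hwb hy'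
      have hval : sendVerts2 L Lab.left R Lab.right (ψ.ι v) = Sum.inr y' := hy'.tgt
      rw [hιv, hval] at h2'
      rw [g2_lr hlr h2']
      exact ared1_to_aredG hψ hwb hy'
    · exact c_arc_bwd hR1 hψ hwb (h3 u ((hR1.2.1 u v).mpr ⟨ha, hnr⟩))
  · intro u ha
    by_cases hnr : ∃ y', ArcRedundant (ψ.relabel (sendVerts2 L Lab.left R Lab.right)) y' v u
    · obtain ⟨y', hy'⟩ := hnr
      have hlr := ared1_lr hψ hwb hy'
      have hval : sendVerts2 L Lab.left R Lab.right (ψ.ι v) = Sum.inr y' := hy'.src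
      rw [hιv, hval] at h2'
      rw [g2_lr hlr h2']
      exact ared1_to_aredG hψ hwb hy'
    · exact c_arc_bwd hR1 hψ hwb (h4 u ((hR1.2.1 v u).mpr ⟨ha, hnr⟩))
  · intro w hψw hvm
    by_cases hw : w ∈ μ.G.verts
    · have hμw : w ∈ μ.G.VT := by rw [hR1.2.2.1]; exact ⟨hψw, hw⟩
      have hvm' : μ.emb.vmap w = v := by rw [mu_vmap_eq hR1 hμw]; exact hvm
      exact c_tvert_bwd hR1 hψ hwb (h5 w hμw hvm')
    · have hred : ∃ y', VertRedundant (ψ.relabel (sendVerts2 L Lab.left R Lab.right)) y' w := by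
        by_contra hcon
        exact hw ((mem_mu_iff hR1).mpr ⟨ψ.G.VT_subset hψw, hcon⟩)
      obtain ⟨y', hred⟩ := hred
      have hT1 : TVertRedundant (ψ.relabel (sendVerts2 L Lab.left R Lab.right)) y' w := by
        rcases hred with h | h
        · exact h
        · exact h.2.2.2.2 w hψw (ψ.emb.fixes w ⟨hψw, h.1⟩)
      have hlr := red1_lr hψ hwb (Or.inl hT1)
      have hval : sendVerts2 L Lab.left R Lab.right (ψ.ι v) = Sum.inr y' := by
        rw [← hvm]; exact hT1.2.2.1
      rw [hιv, hval] at h2'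
      rw [g2_lr hlr h2']
      exact tvertred1_to_G hψ hwb hT1

lemma c_vert_bwd (hR1 : IsRestrictionOf (sendVerts2 L Lab.left R Lab.right) μ ψ)
    (hψ : IsCS Din (L ∪ R ∪ S) ({Lab.future} : Set Lab) ψ)
    (hwb : WellBehaved Din ({Lab.future} : Set Lab) ψ) {v : V} {y : Lab}
    (h : VertRedundant (μ.relabel (sendLabs {Lab.left, Lab.right} Lab.past)) y v) :
    VertRedundant (ψ.relabel (sendVerts (L ∪ R) Lab.past)) y v := by
  rcases h with h | h
  · exact Or.inl (c_tvert_bwd hR1 hψ hwb h)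
  · exact Or.inr (c_nvert_bwd hR1 hψ hwb h)

lemma comp_fwd (hR1 : IsRestrictionOf (sendVerts2 L Lab.left R Lab.right) μ ψ)
    (hψ : IsCS Din (L ∪ R ∪ S) ({Lab.future} : Set Lab) ψ)
    (hwb : WellBehaved Din ({Lab.future} : Set Lab) ψ) (σ : CStruct V Lab)
    (R0 : IsRestrictionOf (sendVerts (L ∪ R) Lab.past) σ ψ) :
    IsRestrictionOf (sendLabs {Lab.left, Lab.right} Lab.past) σ μ := by
  obtain ⟨hv0, ha0, hT0, hN0, hm0, hp0, hi0⟩ := R0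
  have hverts : σ.G.verts = μ.G.verts \
      {v | ∃ y, VertRedundant (μ.relabel (sendLabs {Lab.left, Lab.right} Lab.past)) y v} := by
    rw [hv0, hR1.1]
    ext z
    simp only [Set.mem_diff, Set.mem_setOf_eq]
    constructor
    · rintro ⟨hz, hr⟩
      exact ⟨⟨hz, fun ⟨y, hy⟩ => hr ⟨Lab.past, red1_to_redG hψ hwb hy⟩⟩,
        fun ⟨y, hy⟩ => hr ⟨y, c_vert_bwd hR1 hψ hwb hy⟩⟩
    · rintro ⟨⟨hz, h1⟩, h2⟩
      refine ⟨hz, ?_⟩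
      rintro ⟨y, hy⟩
      obtain rfl := redG_past hψ hwb hy
      exact h2 ⟨Lab.past, c_vert_fwd hR1 hψ ((mem_mu_iff hR1).mpr ⟨hz, h1⟩) hy⟩
  have hsub : σ.G.verts ⊆ μ.G.verts := by rw [hverts]; exact Set.diff_subset
  refine ⟨hverts, ?_, ?_, ?_, ?_, ?_, ?_⟩
  · intro u v
    rw [ha0 u v, hR1.2.1 u v]
    constructor
    · rintro ⟨hA, hr⟩
      exact ⟨⟨hA, fun ⟨y, hy⟩ => hr ⟨Lab.past, ared1_to_aredG hψ hwb hy⟩⟩,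
        fun ⟨y, hy⟩ => hr ⟨y, c_arc_bwd hR1 hψ hwb hy⟩⟩
    · rintro ⟨⟨hA, h1⟩, h2⟩
      refine ⟨hA, ?_⟩
      rintro ⟨y, hy⟩
      obtain rfl := aredG_past hψ hwb hy
      exact h2 ⟨Lab.past, c_arc_fwd hR1 hψ h1 hy⟩
  · rw [hT0, hR1.2.2.1]
    ext z
    constructor
    · rintro ⟨h1, h2⟩; exact ⟨⟨h1, hsub h2⟩, h2⟩
    · rintro ⟨⟨h1, -⟩, h2⟩; exact ⟨h1, h2⟩
  · rw [hN0, hR1.2.2.2.1]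
    ext z
    constructor
    · rintro ⟨h1, h2⟩; exact ⟨⟨h1, hsub h2⟩, h2⟩
    · rintro ⟨⟨h1, -⟩, h2⟩; exact ⟨h1, h2⟩
  · intro v hv
    have hv' : v ∈ ψ.G.VT ∩ σ.G.verts := by rw [← hT0]; exact hv
    have hμ : v ∈ μ.G.VT := by rw [hR1.2.2.1]; exact ⟨hv'.1, hsub hv'.2⟩
    rw [hm0 v hv, mu_vmap_eq hR1 hμ]
  · intro u v hT
    have hA := (ha0 u v).mp hT.1
    have hu' : u ∈ ψ.G.VT ∩ σ.G.verts := by rw [← hT0]; exact hT.2.1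
    have hv' : v ∈ ψ.G.VT ∩ σ.G.verts := by rw [← hT0]; exact hT.2.2
    have hnr1 : ¬ ∃ y, ArcRedundant (ψ.relabel (sendVerts2 L Lab.left R Lab.right)) y u v :=
      fun ⟨y, hy⟩ => hA.2 ⟨Lab.past, ared1_to_aredG hψ hwb hy⟩
    have hμT : μ.G.TArc u v := by
      refine ⟨(hR1.2.1 u v).mpr ⟨hA.1, hnr1⟩, ?_, ?_⟩
      · rw [hR1.2.2.1]; exact ⟨hu'.1, hsub hu'.2⟩
      · rw [hR1.2.2.1]; exact ⟨hv'.1, hsub hv'.2⟩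
    rw [hp0 u v hT, ← mu_pmap_eq hR1 hμT]
  · intro v hv
    have hvψ : v ∈ ψ.G.verts := by
      have := hv; rw [hv0] at this; exact this.1
    rw [hi0 v hv, K4 hR1 hψ (hsub hv)]

lemma comp_bwd (hR1 : IsRestrictionOf (sendVerts2 L Lab.left R Lab.right) μ ψ)
    (hψ : IsCS Din (L ∪ R ∪ S) ({Lab.future} : Set Lab) ψ)
    (hwb : WellBehaved Din ({Lab.future} : Set Lab) ψ) (σ : CStruct V Lab)
    (R2 : IsRestrictionOf (sendLabs {Lab.left, Lab.right} Lab.past) σ μ) :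
    IsRestrictionOf (sendVerts (L ∪ R) Lab.past) σ ψ := by
  obtain ⟨hv0, ha0, hT0, hN0, hm0, hp0, hi0⟩ := R2
  have hverts : σ.G.verts = ψ.G.verts \
      {v | ∃ y, VertRedundant (ψ.relabel (sendVerts (L ∪ R) Lab.past)) y v} := by
    rw [hv0, hR1.1]
    ext z
    simp only [Set.mem_diff, Set.mem_setOf_eq]
    constructor
    · rintro ⟨⟨hz, h1⟩, h2⟩
      refine ⟨hz, ?_⟩
      rintro ⟨y, hy⟩
      obtain rfl := redG_past hψ hwb hy
      exact h2 ⟨Lab.past, c_vert_fwd hR1 hψ ((mem_mu_iff hR1).mpr ⟨hz, h1⟩) hy⟩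
    · rintro ⟨hz, hr⟩
      exact ⟨⟨hz, fun ⟨y, hy⟩ => hr ⟨Lab.past, red1_to_redG hψ hwb hy⟩⟩,
        fun ⟨y, hy⟩ => hr ⟨y, c_vert_bwd hR1 hψ hwb hy⟩⟩
  have hsub' : σ.G.verts ⊆ μ.G.verts := by rw [hv0]; exact Set.diff_subset
  refine ⟨hverts, ?_, ?_, ?_, ?_, ?_, ?_⟩
  · intro u v
    rw [ha0 u v, hR1.2.1 u v]
    constructor
    · rintro ⟨⟨hA, h1⟩, h2⟩
      refine ⟨hA, ?_⟩
      rintro ⟨y, hy⟩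
      obtain rfl := aredG_past hψ hwb hy
      exact h2 ⟨Lab.past, c_arc_fwd hR1 hψ h1 hy⟩
    · rintro ⟨hA, hr⟩
      exact ⟨⟨hA, fun ⟨y, hy⟩ => hr ⟨Lab.past, ared1_to_aredG hψ hwb hy⟩⟩,
        fun ⟨y, hy⟩ => hr ⟨y, c_arc_bwd hR1 hψ hwb hy⟩⟩
  · rw [hT0, hR1.2.2.1]
    ext z
    constructor
    · rintro ⟨⟨h1, -⟩, h2⟩; exact ⟨h1, h2⟩
    · rintro ⟨h1, h2⟩; exact ⟨⟨h1, hsub' h2⟩, h2⟩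
  · rw [hN0, hR1.2.2.2.1]
    ext z
    constructor
    · rintro ⟨⟨h1, -⟩, h2⟩; exact ⟨h1, h2⟩
    · rintro ⟨h1, h2⟩; exact ⟨⟨h1, hsub' h2⟩, h2⟩
  · intro v hv
    have hv' : v ∈ μ.G.VT ∩ σ.G.verts := by rw [← hT0]; exact hv
    rw [hm0 v hv, mu_vmap_eq hR1 hv'.1]
  · intro u v hT
    have hA := (ha0 u v).mp hT.1
    have hu' : u ∈ μ.G.VT ∩ σ.G.verts := by rw [← hT0]; exact hT.2.1
    have hv' : v ∈ μ.G.VT ∩ σ.G.verts := by rw [← hT0]; exact hT.2.2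
    have hμT : μ.G.TArc u v := ⟨hA.1, hu'.1, hv'.1⟩
    rw [hp0 u v hT, mu_pmap_eq hR1 hμT]
  · intro v hv
    rw [hi0 v hv, K4 hR1 hψ (hsub' hv)]

lemma arc_equiv (hR1 : IsRestrictionOf (sendVerts2 L Lab.left R Lab.right) μ ψ)
    (hψ : IsCS Din (L ∪ R ∪ S) ({Lab.future} : Set Lab) ψ)
    (hwb : WellBehaved Din ({Lab.future} : Set Lab) ψ) (u v : V) :
    (∃ y, ArcRedundant (ψ.relabel (sendVerts (L ∪ R) Lab.past)) y u v) ↔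
      (∃ y, ArcRedundant (ψ.relabel (sendVerts2 L Lab.left R Lab.right)) y u v) ∨
        (∃ y, ArcRedundant (μ.relabel (sendLabs {Lab.left, Lab.right} Lab.past)) y u v) := by
  constructor
  · rintro ⟨y, h⟩
    obtain rfl := aredG_past hψ hwb h
    by_cases hnr : ∃ y', ArcRedundant (ψ.relabel (sendVerts2 L Lab.left R Lab.right)) y' u v
    · exact Or.inl hnr
    · exact Or.inr ⟨Lab.past, c_arc_fwd hR1 hψ hnr h⟩
  · rintro (⟨y, h⟩ | ⟨y, h⟩)
    · exact ⟨Lab.past, ared1_to_aredG hψ hwb h⟩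
    · exact ⟨y, c_arc_bwd hR1 hψ hwb h⟩

end WithR1

lemma vmap_survives (hψ : IsCS Din (L ∪ R ∪ S) ({Lab.future} : Set Lab) ψ)
    (hwb : WellBehaved Din ({Lab.future} : Set Lab) ψ) {σ : CStruct V Lab}
    (R0 : IsRestrictionOf (sendVerts (L ∪ R) Lab.past) σ ψ) {u : V} (hu : u ∈ ψ.G.VT)
    (hnr : ¬ ∃ y, VertRedundant (ψ.relabel (sendVerts2 L Lab.left R Lab.right)) y u) :
    ¬ ∃ y, VertRedundant (ψ.relabel (sendVerts2 L Lab.left R Lab.right)) y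
      (ψ.emb.vmap u) := by
  rintro ⟨y, hTx | hNx⟩
  case inr => exact hnr ⟨y, Or.inl (hNx.2.2.2.2 u hu rfl)⟩
  case inl =>
    have hxVT : ψ.emb.vmap u ∈ ψ.G.VT := hTx.1
    have hxVN : ψ.emb.vmap u ∈ ψ.G.VN := ψ.emb.vmap_mem u hu
    by_cases hxu : ψ.emb.vmap u = u
    · exact hnr ⟨y, Or.inl (by rw [← hxu]; exact hTx)⟩
    have hylr : y = Lab.left ∨ y = Lab.right := red1_lr hψ hwb (Or.inl hTx)
    -- Step 2: `u` is not past-redundant.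
    have hnrG : ¬ ∃ y0, VertRedundant (ψ.relabel (sendVerts (L ∪ R) Lab.past)) y0 u := by
      rintro ⟨y0, hred⟩
      obtain rfl := redG_past hψ hwb hred
      rcases hred with hT | hN
      · -- `u` would be a past-redundant tree vertex
        have hne : ψ.ι u ≠ ψ.ι (ψ.emb.vmap u) := by
          intro he
          have hg1u : sendVerts2 L Lab.left R Lab.right (ψ.ι u) = Sum.inr y := by
            rw [he]; exact hTx.2.1
          rcases psi_lab hψ u (ψ.G.VT_subset hu) with ⟨s, hsmem, hl⟩ | hl
          · exact hxu (hψ.1.2.2.2.1 _ (ψ.G.VT_subset hxVT) u (ψ.G.VT_subset hu) s hsmem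
              (by rw [← he]; exact hl) hl)
          · rw [hl] at hg1u
            have hfy : Lab.future = y := by simpa [sendVerts2] using hg1u
            rcases hylr with rfl | rfl <;> exact absurd hfy (by decide)
        have hout2 : ψ.G.outDeg u = 2 := hψ.2.2 u hu hne
        have hne0 : ({w | ψ.G.Arc u w} : Set V).ncard ≠ 0 := by
          have h2 : ({w | ψ.G.Arc u w} : Set V).ncard = 2 := hout2
          rw [h2]; exact two_ne_zero
        obtain ⟨w, hw⟩ := Set.nonempty_of_ncard_ne_zero hne0
        have hared := hT.2.2.2.2.1 w hw
        rcases hared with hTr | hNr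
        · exact shared_image_no_tarc (χ := ψ) hxVT hTr.1
        · exact ψ.G.shared_out u ⟨hu, hNr.1.2.1⟩ w hw
      · -- `u` would be a past-redundant network vertex, hence shared
        exact hxu (ψ.emb.fixes u ⟨hu, hN.1⟩)
    -- Step 3: `u`, and hence its image, survives in `σ`
    have huσ : u ∈ σ.G.verts := by rw [R0.1]; exact ⟨ψ.G.VT_subset hu, hnrG⟩
    have huσT : u ∈ σ.G.VT := by rw [R0.2.2.1]; exact ⟨hu, huσ⟩
    have hxσ : ψ.emb.vmap u ∈ σ.G.verts := by
      have h1 := σ.emb.vmap_mem u huσT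
      rw [R0.2.2.2.2.1 u huσT] at h1
      exact σ.G.VN_subset h1
    have hxnr : ¬ ∃ y0, VertRedundant (ψ.relabel (sendVerts (L ∪ R) Lab.past)) y0
        (ψ.emb.vmap u) := by
      have := hxσ; rw [R0.1] at this; exact this.2
    exact hxnr ⟨Lab.past, red1_to_redG hψ hwb (Or.inl hTx)⟩

end MuHelpers

section Prune

/-- The display graph obtained from that of `ψ` by deleting all `g₁`-redundant
arcs and vertices. -/
noncomputable def pruneG (ψ : CStruct V Lab) (g1 : V ⊕ Lab → V ⊕ Lab) : DispGraph V where
  verts := ψ.G.verts \ {v | ∃ y, VertRedundant (ψ.relabel g1) y v}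
  Arc u v := ψ.G.Arc u v ∧ ¬ ∃ y, ArcRedundant (ψ.relabel g1) y u v
  arc_left := by
    rintro u v ⟨hA, hn⟩
    refine ⟨ψ.G.arc_left hA, ?_⟩
    rintro ⟨y, hy⟩
    exact hn ⟨y, hy.arc_out hA⟩
  arc_right := by
    rintro u v ⟨hA, hn⟩
    refine ⟨ψ.G.arc_right hA, ?_⟩
    rintro ⟨y, hy⟩
    exact hn ⟨y, hy.arc_in hA⟩
  VT := ψ.G.VT ∩ (ψ.G.verts \ {v | ∃ y, VertRedundant (ψ.relabel g1) y v})
  VN := ψ.G.VN ∩ (ψ.G.verts \ {v | ∃ y, VertRedundant (ψ.relabel g1) y v})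
  union_eq := by
    rw [← Set.union_inter_distrib_right, ψ.G.union_eq,
      Set.inter_eq_self_of_subset_right Set.diff_subset]
  finite := ψ.G.finite.subset Set.diff_subset
  acyclic := fun v h => ψ.G.acyclic v (Relation.TransGen.mono (fun _ _ hab => hab.1) v v h)
  tree_indeg := by
    intro v
    refine le_trans (Set.ncard_le_ncard ?_
      (ψ.G.finite.subset (fun u hu => ψ.G.arc_left hu.1))) (ψ.G.tree_indeg v)
    rintro u ⟨⟨h1, -⟩, ⟨h2, -⟩, h3, -⟩
    exact ⟨h1, h2, h3⟩
  indeg_le := fun v =>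
    le_trans (Set.ncard_le_ncard (fun u hu => hu.1)
      (ψ.G.finite.subset (fun u hu => ψ.G.arc_left hu))) (ψ.G.indeg_le v)
  outdeg_le := fun v =>
    le_trans (Set.ncard_le_ncard (fun u hu => hu.1)
      (ψ.G.finite.subset (fun u hu => ψ.G.arc_right hu))) (ψ.G.outdeg_le v)
  totdeg_le := fun v =>
    le_trans (Nat.add_le_add
      (Set.ncard_le_ncard (fun u hu => hu.1)
        (ψ.G.finite.subset (fun u hu => ψ.G.arc_left hu)))
      (Set.ncard_le_ncard (fun u hu => hu.1)
        (ψ.G.finite.subset (fun u hu => ψ.G.arc_right hu)))) (ψ.G.totdeg_le v)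
  shared_out := fun v hv u hA => ψ.G.shared_out v ⟨hv.1.1, hv.2.1⟩ u hA.1
  shared_in_T := by
    intro v hv
    refine le_trans (Set.ncard_le_ncard ?_
      (ψ.G.finite.subset (fun u hu => ψ.G.arc_left hu.1)))
      (ψ.G.shared_in_T v ⟨hv.1.1, hv.2.1⟩)
    rintro u ⟨⟨h1, -⟩, h2, -⟩
    exact ⟨h1, h2⟩
  shared_in_N := by
    intro v hv
    refine le_trans (Set.ncard_le_ncard ?_
      (ψ.G.finite.subset (fun u hu => ψ.G.arc_left hu.1)))
      (ψ.G.shared_in_N v ⟨hv.1.1, hv.2.1⟩)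
    rintro u ⟨⟨h1, -⟩, h2, -⟩
    exact ⟨h1, h2⟩

attribute [reducible] pruneG

end Prune

section Recon

variable {Din : DispGraph V} {L R S : Set V} {ψ μ : CStruct V Lab}

lemma g1_eq_inl {x : V ⊕ Lab} {s : V}
    (h : sendVerts2 L Lab.left R Lab.right x = Sum.inl s) : x = Sum.inl s := by
  match x with
  | Sum.inl w =>
    by_cases hL : w ∈ L
    · simp [sendVerts2, hL] at h
    · by_cases hR : w ∈ R
      · simp [sendVerts2, hL, hR] at h
      · simpa [sendVerts2, hL, hR] using h
  | Sum.inr y => simp [sendVerts2] at h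

lemma g1_inl_S {s : V} (hsl : s ∉ L) (hsr : s ∉ R) :
    sendVerts2 L Lab.left R Lab.right (Sum.inl s) = (Sum.inl s : V ⊕ Lab) := by
  simp [sendVerts2, hsl, hsr]

lemma recon_of_restrict (hdisj : Disjoint (L ∪ R) S)
    (hψ : IsCS Din (L ∪ R ∪ S) ({Lab.future} : Set Lab) ψ)
    (hR1 : IsRestrictionOf (sendVerts2 L Lab.left R Lab.right) μ ψ) :
    IsReconciliation Din S μ := by
  have hι := hR1.2.2.2.2.2.2
  have hnotL : ∀ s ∈ S, s ∉ L := fun s hs h =>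
    (Set.disjoint_left.mp hdisj (Set.mem_union_left R h)) hs
  have hnotR : ∀ s ∈ S, s ∉ R := fun s hs h =>
    (Set.disjoint_left.mp hdisj (Set.mem_union_right L h)) hs
  have hmemS : ∀ s ∈ S, s ∈ L ∪ R ∪ S := fun s hs => Set.mem_union_right (L ∪ R) hs
  have hinl : ∀ s ∈ S, ∀ v ∈ μ.G.verts, μ.ι v = Sum.inl s → ψ.ι v = Sum.inl s := by
    intro s _ v hv h
    rw [hι v hv] at h
    exact g1_eq_inl h
  have hinl' : ∀ s ∈ S, ∀ v ∈ μ.G.verts, ψ.ι v = Sum.inl s → μ.ι v = Sum.inl s := by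
    intro s hs v hv h
    rw [hι v hv, h]
    exact g1_inl_S (hnotL s hs) (hnotR s hs)
  have hnored : ∀ s ∈ S, ∀ v ∈ μ.G.verts, ψ.ι v = Sum.inl s →
      ∀ y, sendVerts2 L Lab.left R Lab.right (ψ.ι v) ≠ Sum.inr y := by
    intro s hs v _ h y
    rw [h, g1_inl_S (hnotL s hs) (hnotR s hs)]
    simp
  refine ⟨⟨?_, ?_, ?_, ?_, ?_⟩, ?_, ?_⟩
  · -- isolabelling (1)
    intro u hu
    rw [hι u hu]
    rcases psi_lab hψ u (mu_sub hR1 hu) with ⟨s, hs, hl⟩ | hl <;> rw [hl]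
    · by_cases hL : s ∈ L
      · exact Or.inr ⟨Lab.left, by simp [lrfLabs], by simp [sendVerts2, hL]⟩
      · by_cases hR : s ∈ R
        · exact Or.inr ⟨Lab.right, by simp [lrfLabs], by simp [sendVerts2, hL, hR]⟩
        · have hsS : s ∈ S := by
            rcases (Set.mem_union s (L ∪ R) S).mp hs with hs' | hs'
            · rcases (Set.mem_union s L R).mp hs' with h | h
              · exact absurd h hL
              · exact absurd h hR
            · exact hs'
          exact Or.inl ⟨s, hsS, by simp [sendVerts2, hL, hR]⟩
    · exact Or.inr ⟨Lab.future, by simp [lrfLabs], rfl⟩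
  · -- isolabelling (2)
    intro s hs
    obtain ⟨u, hu, hl⟩ := hψ.1.2.1 s (hmemS s hs)
    have hnr : ¬ ∃ y, VertRedundant (ψ.relabel (sendVerts2 L Lab.left R Lab.right)) y u := by
      rintro ⟨y, hy⟩
      have hlab := hy.label
      rw [relabel_ι, hl, g1_inl_S (hnotL s hs) (hnotR s hs)] at hlab
      exact absurd hlab (by simp)
    have huM : u ∈ μ.G.verts := (mem_mu_iff hR1).mpr ⟨hu, hnr⟩
    exact ⟨u, huM, hinl' s hs u huM hl⟩
  · -- isolabelling (3)
    intro u hu s hs h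
    have hψl := hinl s hs u hu h
    obtain ⟨hN, hT⟩ := hψ.1.2.2.1 u (mu_sub hR1 hu) s (hmemS s hs) hψl
    constructor
    · intro hd
      rw [hR1.2.2.2.1]; exact ⟨hN hd, hu⟩
    · intro hd
      rw [hR1.2.2.1]; exact ⟨hT hd, hu⟩
  · -- isolabelling (4)
    intro u hu v hv s hs h1 h2
    exact hψ.1.2.2.2.1 u (mu_sub hR1 hu) v (mu_sub hR1 hv) s (hmemS s hs)
      (hinl s hs u hu h1) (hinl s hs v hv h2)
  · -- isolabelling (5)
    intro u hu v hv s hs t ht h1 h2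
    have hψ1 := hinl s hs u hu h1
    have hψ2 := hinl t ht v hv h2
    have hiff := hψ.1.2.2.2.2 u (mu_sub hR1 hu) v (mu_sub hR1 hv) s (hmemS s hs) t
      (hmemS t ht) hψ1 hψ2
    constructor
    · intro h
      exact hiff.mp (mu_arc_psi hR1 h)
    · intro h
      refine (hR1.2.1 u v).mpr ⟨hiff.mpr h, ?_⟩
      rintro ⟨y, hy⟩
      exact hnored s hs u hu hψ1 y hy.src
  · -- degrees
    intro u hu s hs h
    have hψl := hinl s hs u hu h
    obtain ⟨hin, hout⟩ := hψ.2.1 u (mu_sub hR1 hu) s (hmemS s hs) hψl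
    have hsetin : {w | μ.G.Arc w u} = {w | ψ.G.Arc w u} := by
      ext w
      simp only [Set.mem_setOf_eq]
      constructor
      · exact fun ha => mu_arc_psi hR1 ha
      · intro ha
        refine (hR1.2.1 w u).mpr ⟨ha, ?_⟩
        rintro ⟨y, hy⟩
        exact hnored s hs u hu hψl y hy.tgt
    have hsetout : {w | μ.G.Arc u w} = {w | ψ.G.Arc u w} := by
      ext w
      simp only [Set.mem_setOf_eq]
      constructor
      · exact fun ha => mu_arc_psi hR1 ha
      · intro ha
        refine (hR1.2.1 u w).mpr ⟨ha, ?_⟩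
        rintro ⟨y, hy⟩
        exact hnored s hs u hu hψl y hy.src
    constructor
    · rw [← hin]
      exact congrArg Set.ncard hsetin
    · rw [← hout]
      exact congrArg Set.ncard hsetout
  · -- condition on embedded tree vertices
    intro u hu hne
    have huM : u ∈ μ.G.verts := μ.G.VT_subset hu
    have hψVT : u ∈ ψ.G.VT := by
      have := hu; rw [hR1.2.2.1] at this; exact this.1
    have hxeq := mu_vmap_eq hR1 hu
    have hxM : ψ.emb.vmap u ∈ μ.G.verts := mu_vmap_mem hR1 hu
    have hψne : ψ.ι u ≠ ψ.ι (ψ.emb.vmap u) := by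
      intro he
      exact hne (by rw [hι u huM, hxeq, hι _ hxM, he])
    have hout2 : ψ.G.outDeg u = 2 := hψ.2.2 u hψVT hψne
    have hset : {w | μ.G.Arc u w} = {w | ψ.G.Arc u w} := by
      ext w
      simp only [Set.mem_setOf_eq]
      constructor
      · exact fun ha => mu_arc_psi hR1 ha
      · intro ha
        refine (hR1.2.1 u w).mpr ⟨ha, ?_⟩
        rintro ⟨y, hy | hy⟩
        · -- tree-arc redundancy would force equal labels on `u` and its image
          have hT : ψ.G.TArc u w := hy.1
          have hd : ψ.emb.vmap u ∈ ψ.emb.pmap u w := vmap_mem_pmap hT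
          have h1 : sendVerts2 L Lab.left R Lab.right (ψ.ι u) = Sum.inr y := hy.2.1
          have h2 : sendVerts2 L Lab.left R Lab.right (ψ.ι (ψ.emb.vmap u)) = Sum.inr y :=
            hy.2.2.2 _ hd
          exact hne (by rw [hι u huM, hxeq, hι _ hxM, h1, h2])
        · exact ψ.G.shared_out u ⟨hψVT, hy.1.2.1⟩ w ha
    have : μ.G.outDeg u = ψ.G.outDeg u := congrArg Set.ncard hset
    rw [this, hout2]

end Recon

/-- A (well-behaved) signature `σ` for a Join bag `(L∪R,S,F)` is valid
iff there is a valid reconciliation `μ` for `(L∪R,S,F)` such that `σ` is the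
`({left,right}→past)`-restriction of `μ`. -/
theorem joinBag_valid_iff_recon {V : Type} (Din : DispGraph V) (L R S F : Set V)
    (hbag : IsBag Din (L ∪ R) S F) (hbagL : IsBag Din L S (F ∪ R))
    (hbagR : IsBag Din R S (F ∪ L)) (hLR : Disjoint L R)
    (σ : CStruct V Lab) (hsig : IsSignature Din S σ) (hwb : WellBehaved Din pfLabs σ) :
    ValidSig Din (L ∪ R) S F σ ↔
      ∃ μ : CStruct V Lab, IsReconciliation Din S μ ∧ ValidRecon Din L R S F μ ∧
        IsRestrictionOf (sendLabs ({Lab.left, Lab.right} : Set Lab) Lab.past) σ μ := by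
  constructor
  · rintro ⟨ψ, hψPS, hwbψ, R0⟩
    have hψCS : IsCS Din (L ∪ R ∪ S) ({Lab.future} : Set Lab) ψ := hψPS
    -- construct the embedding on the pruned display graph
    have hemb : ∃ e : EmbFun (pruneG ψ (sendVerts2 L Lab.left R Lab.right)),
        e.vmap = ψ.emb.vmap ∧ e.pmap = ψ.emb.pmap := by
      refine ⟨⟨ψ.emb.vmap, ψ.emb.pmap, ?_, ?_, ?_, ?_, ?_, ?_⟩, rfl, rfl⟩
      · -- vmap_mem
        intro u hu
        refine ⟨ψ.emb.vmap_mem u hu.1, ψ.G.VN_subset (ψ.emb.vmap_mem u hu.1), ?_⟩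
        exact vmap_survives hψCS hwbψ R0 hu.1 hu.2.2
      · -- path_spec
        intro u v h
        have hψT : ψ.G.TArc u v := ⟨h.1.1, h.2.1.1, h.2.2.1⟩
        have hnr := h.1.2
        obtain ⟨hc, hnd, hh, hl⟩ := pmap_dipath (χ := ψ) hψT
        refine ⟨chain'_iff_arcs.mpr ?_, hnd, hh, hl⟩
        intro a b hab
        obtain ⟨hN, hnr'⟩ := psi_path_arcs hψT hnr hab
        have haD : a ∈ ψ.G.verts \
            {v | ∃ y, VertRedundant (ψ.relabel (sendVerts2 L Lab.left R Lab.right)) y v} :=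
          ⟨ψ.G.VN_subset hN.2.1, fun ⟨y, hy⟩ => nonred_src hN.1 hnr' hy⟩
        have hbD : b ∈ ψ.G.verts \
            {v | ∃ y, VertRedundant (ψ.relabel (sendVerts2 L Lab.left R Lab.right)) y v} :=
          ⟨ψ.G.VN_subset hN.2.2, fun ⟨y, hy⟩ => nonred_tgt hN.1 hnr' hy⟩
        exact ⟨⟨hN.1, hnr'⟩, ⟨hN.2.1, haD⟩, ⟨hN.2.2, hbD⟩⟩
      · -- inj
        intro u hu v hv h
        exact ψ.emb.inj u hu.1 v hv.1 h
      · -- fixes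
        intro u hu
        exact ψ.emb.fixes u ⟨hu.1.1, hu.2.1⟩
      · -- arc_disjoint
        intro u v u' v' h1 h2 hne e he
        exact ψ.emb.arc_disjoint ⟨h1.1.1, h1.2.1.1, h1.2.2.1⟩
          ⟨h2.1.1, h2.2.1.1, h2.2.2.1⟩ hne e he
      · -- share
        intro u v u' v' h1 h2 hne z hz hz'
        exact ψ.emb.share ⟨h1.1.1, h1.2.1.1, h1.2.2.1⟩
          ⟨h2.1.1, h2.2.1.1, h2.2.2.1⟩ hne z hz hz'
    obtain ⟨e, hevm, hepm⟩ := hemb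
    refine ⟨⟨pruneG ψ (sendVerts2 L Lab.left R Lab.right), e,
      fun v => sendVerts2 L Lab.left R Lab.right (ψ.ι v)⟩, ?_, ?_, ?_⟩
    case _ =>
      exact recon_of_restrict hbag.2.1 hψCS
        ⟨rfl, fun u v => Iff.rfl, rfl, rfl, fun v _ => congrFun hevm v,
          fun u v _ => congrFun (congrFun hepm u) v, fun v _ => rfl⟩
    case _ =>
      exact ⟨ψ, hψCS, hwbψ,
        ⟨rfl, fun u v => Iff.rfl, rfl, rfl, fun v _ => congrFun hevm v,
          fun u v _ => congrFun (congrFun hepm u) v, fun v _ => rfl⟩⟩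
    case _ =>
      exact comp_fwd
        ⟨rfl, fun u v => Iff.rfl, rfl, rfl, fun v _ => congrFun hevm v,
          fun u v _ => congrFun (congrFun hepm u) v, fun v _ => rfl⟩
        hψCS hwbψ σ R0
  · rintro ⟨μ, hrec, ⟨ψ, hψCS, hwbψ, R1⟩, R2⟩
    exact ⟨ψ, hψCS, hwbψ, comp_bwd R1 hψCS hwbψ σ R2⟩

end TreeContainment
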